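/- arXiv:2003.04461 — 6 statements merged into one kernel-verified Lean document; each statement's English description precedes it below -/
import Mathlib

section
/- Let m ≥ 1, let 𝟙 ∈ ℝ^m be the all-ones vector, and let ū ∈ ∏_i (u̲_i, ū_i). Then the following are equivalent: (i) ū is the unique minimizer of the resource allocation problem; (ii) there exists η̄ ∈ span(𝟙) such that 0 = (1/β) K 𝟙 (𝟙ᵀū − d) + L η̄ and J_i'(ū_i) = η̄_i for every i. Moreover, when (ii) holds the vector η̄ is unique. (Paper's Lemma 1, with the conjugate-gradient relation ū = ∇J*(η̄) written equivalently as ∇J(ū) = η̄.) -/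
/-!
Because `η̄` is constant, `L η̄ = 0`, and since `wᵀ K 𝟙 > 0` the vector `K 𝟙` is nonzero, so the
first distributed condition says exactly `𝟙ᵀ ū = d`. What remains is the Lagrange condition for
the separable problem. At a minimiser, shifting mass `t` from coordinate `j` to coordinate `i`
stays feasible for small `t`, so `J_i'(ū_i) = J_j'(ū_j)`. Conversely, if all `J_i'(ū_i)` equal `c`,
the mean value theorem and strict monotonicity of `J_i'` give
`J_i(v_i) - J_i(ū_i) > c (v_i - ū_i)` whenever `v_i ≠ ū_i`, and the right-hand sides sum to `0`
over any feasible `v`.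
-/

open Filter Matrix

section FirstOrder

variable {s : Set ℝ} {f f' : ℝ → ℝ}

theorem StrictMonoOn.mul_sub_lt_sub_lt_of_hasDerivAt (hs : s.OrdConnected)
    (hf : ∀ x ∈ s, HasDerivAt f (f' x) x) (hf' : StrictMonoOn f' s) {x y : ℝ}
    (hx : x ∈ s) (hy : y ∈ s) (hxy : x < y) :
    f' x * (y - x) < f y - f x ∧ f y - f x < f' y * (y - x) := by
  have hIcc : Set.Icc x y ⊆ s := hs.out hx hy
  obtain ⟨c, hc, hslope⟩ := exists_hasDerivAt_eq_slope f f' hxy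
    (fun z hz => (hf z (hIcc hz)).continuousAt.continuousWithinAt)
    (fun z hz => hf z (hIcc (Set.Ioo_subset_Icc_self hz)))
  have hcs : c ∈ s := hIcc (Set.Ioo_subset_Icc_self hc)
  have hyx : 0 < y - x := sub_pos.mpr hxy
  rw [eq_div_iff hyx.ne'] at hslope
  rw [← hslope]
  exact ⟨mul_lt_mul_of_pos_right (hf' hx hcs hc.1) hyx,
    mul_lt_mul_of_pos_right (hf' hcs hy hc.2) hyx⟩

theorem StrictMonoOn.mul_sub_lt_sub_of_hasDerivAt (hs : s.OrdConnected)
    (hf : ∀ x ∈ s, HasDerivAt f (f' x) x) (hf' : StrictMonoOn f' s) {x y : ℝ}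
    (hx : x ∈ s) (hy : y ∈ s) (hxy : x ≠ y) :
    f' x * (y - x) < f y - f x := by
  rcases hxy.lt_or_gt with hlt | hgt
  · exact (hf'.mul_sub_lt_sub_lt_of_hasDerivAt hs hf hx hy hlt).1
  · have := (hf'.mul_sub_lt_sub_lt_of_hasDerivAt hs hf hy hx hgt).2
    linarith

theorem strictMonoOn_of_strongly_monotone {μ : ℝ} (hμ : 0 < μ)
    (hf' : ∀ x ∈ s, ∀ y ∈ s, μ * (x - y) ^ 2 ≤ (f' x - f' y) * (x - y)) :
    StrictMonoOn f' s := by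
  intro x hx y hy hxy
  have hpos : 0 < μ * (y - x) ^ 2 := by have := sub_pos.mpr hxy; positivity
  nlinarith [hf' y hy x hx]

end FirstOrder

section SeparableAllocation

variable {ι : Type*} [Fintype ι] {s : ι → Set ℝ} {f f' : ι → ℝ → ℝ} {u : ι → ℝ}

theorem sum_lt_sum_of_deriv_eq_const (hs : ∀ i, (s i).OrdConnected)
    (hf : ∀ i, ∀ x ∈ s i, HasDerivAt (f i) (f' i x) x) (hf' : ∀ i, StrictMonoOn (f' i) (s i))
    (hu : ∀ i, u i ∈ s i) {c : ℝ} (hc : ∀ i, f' i (u i) = c) {v : ι → ℝ}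
    (hv : ∀ i, v i ∈ s i) (hsum : ∑ i, v i = ∑ i, u i) (hne : v ≠ u) :
    ∑ i, f i (u i) < ∑ i, f i (v i) := by
  have hle : ∀ i, c * (v i - u i) ≤ f i (v i) - f i (u i) := by
    intro i
    rcases eq_or_ne (u i) (v i) with heq | hne
    · simp [heq]
    · exact hc i ▸ ((hf' i).mul_sub_lt_sub_of_hasDerivAt (hs i) (hf i) (hu i) (hv i) hne).le
  obtain ⟨i₀, hi₀⟩ := Function.ne_iff.mp hne
  have hlt : ∑ i, c * (v i - u i) < ∑ i, (f i (v i) - f i (u i)) :=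
    Finset.sum_lt_sum (fun i _ => hle i) ⟨i₀, Finset.mem_univ _,
      hc i₀ ▸ (hf' i₀).mul_sub_lt_sub_of_hasDerivAt (hs i₀) (hf i₀) (hu i₀) (hv i₀) (Ne.symm hi₀)⟩
  rw [← Finset.mul_sum, Finset.sum_sub_distrib, hsum, sub_self, mul_zero,
    Finset.sum_sub_distrib] at hlt
  linarith

variable {g : ι → ℝ}

theorem sum_mul_eq_zero_of_isMinOn (hs : ∀ i, s i ∈ nhds (u i))
    (hf : ∀ i, HasDerivAt (f i) (g i) (u i))
    (hmin : ∀ v : ι → ℝ, (∀ i, v i ∈ s i) → ∑ i, v i = ∑ i, u i →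
      ∑ i, f i (u i) ≤ ∑ i, f i (v i))
    {e : ι → ℝ} (he : ∑ i, e i = 0) :
    ∑ i, g i * e i = 0 := by
  have hderiv : HasDerivAt (fun t => ∑ i, f i (u i + t * e i)) (∑ i, g i * e i) 0 :=
    HasDerivAt.fun_sum fun i _ => by
      simpa [Function.comp_def] using (hf i).comp_of_eq 0
        (((hasDerivAt_id 0).mul_const (e i)).const_add (u i)) (by simp)
  refine IsLocalMin.hasDerivAt_eq_zero ?_ hderiv
  have hnear : ∀ᶠ t in nhds (0 : ℝ), ∀ i, u i + t * e i ∈ s i :=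
    eventually_all.mpr fun i =>
      (Continuous.tendsto' (by fun_prop) 0 (u i) (by simp)).eventually (hs i)
  filter_upwards [hnear] with t ht
  simpa [Finset.sum_add_distrib, ← Finset.mul_sum, he] using
    hmin (fun i => u i + t * e i) ht (by simp [Finset.sum_add_distrib, ← Finset.mul_sum, he])

theorem exists_deriv_eq_const_of_isMinOn (hs : ∀ i, s i ∈ nhds (u i))
    (hf : ∀ i, HasDerivAt (f i) (g i) (u i))
    (hmin : ∀ v : ι → ℝ, (∀ i, v i ∈ s i) → ∑ i, v i = ∑ i, u i →
      ∑ i, f i (u i) ≤ ∑ i, f i (v i)) :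
    ∃ c, ∀ i, g i = c := by
  classical
  have hpair : ∀ i j, g i = g j := by
    intro i j
    rcases eq_or_ne i j with rfl | hij
    · rfl
    have := sum_mul_eq_zero_of_isMinOn hs hf hmin
      (e := Pi.single i 1 - Pi.single j 1) (by simp [Finset.sum_sub_distrib])
    simp only [Pi.sub_apply, Pi.single_apply, mul_sub, mul_ite, mul_one, mul_zero,
      Finset.sum_sub_distrib, Finset.sum_ite_eq', Finset.mem_univ, if_true] at this
    linarith
  rcases isEmpty_or_nonempty ι with hι | ⟨⟨i₀⟩⟩
  · exact ⟨0, fun i => isEmptyElim i⟩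
  · exact ⟨g i₀, fun i => hpair i i₀⟩

end SeparableAllocation

theorem consensus_condition_iff_eq_zero {n : Type*} [Fintype n] {L K : Matrix n n ℝ}
    (hL1 : L *ᵥ (fun _ => (1 : ℝ)) = 0) {w : n → ℝ} (hwK : 0 < w ᵥ* K ⬝ᵥ (fun _ => (1 : ℝ)))
    {β : ℝ} (hβ : β ≠ 0) (c e : ℝ) :
    (∀ j, 0 = (1 / β) * (K *ᵥ (fun _ => (1 : ℝ))) j * e + (L *ᵥ fun _ => c) j) ↔ e = 0 := by
  have hLc : (L *ᵥ fun _ => c) = 0 := by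
    rw [show (fun _ : n => c) = c • fun _ => (1 : ℝ) by ext; simp, mulVec_smul, hL1, smul_zero]
  simp only [hLc, Pi.zero_apply, add_zero]
  refine ⟨fun h => by_contra fun he => ?_, fun he j => by simp [he]⟩
  have hK1 : K *ᵥ (fun _ => (1 : ℝ)) = 0 := funext fun j => by
    simpa [hβ, he] using (h j).symm
  rw [← dotProduct_mulVec, hK1, dotProduct_zero] at hwK
  exact hwK.false

theorem dapi_distributed_optimality_conditions_general
    (m : ℕ)
    (lo hi : Fin m → EReal)
    (J J' : Fin m → ℝ → ℝ) (μ : Fin m → ℝ) (hμ : ∀ i, 0 < μ i)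
    (hderiv : ∀ i, ∀ x : ℝ, lo i < (x : EReal) → (x : EReal) < hi i →
      HasDerivAt (J i) (J' i x) x)
    (hconv : ∀ i, ∀ x y : ℝ, lo i < (x : EReal) → (x : EReal) < hi i →
      lo i < (y : EReal) → (y : EReal) < hi i →
      μ i * (x - y) ^ 2 ≤ (J' i x - J' i y) * (x - y))
    (d : ℝ)
    (L : Matrix (Fin m) (Fin m) ℝ)
    (hL1 : L.mulVec (fun _ => (1 : ℝ)) = 0)
    (w : Fin m → ℝ)
    (K : Matrix (Fin m) (Fin m) ℝ)
    (hwK : 0 < Matrix.vecMul w K ⬝ᵥ (fun _ => (1 : ℝ)))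
    (β : ℝ) (hβ : 0 < β)
    (ubar : Fin m → ℝ)
    (hubar : ∀ i, lo i < (ubar i : EReal) ∧ (ubar i : EReal) < hi i) :
    -- (i) ū is the unique minimizer  ↔  (ii) ∃ η̄ ∈ span 𝟙 satisfying the distributed conditions
    (((((∀ i, lo i < (ubar i : EReal) ∧ (ubar i : EReal) < hi i) ∧ ∑ i, ubar i = d) ∧
        (∀ v : Fin m → ℝ,
          ((∀ i, lo i < (v i : EReal) ∧ (v i : EReal) < hi i) ∧ ∑ i, v i = d) →
          ∑ i, J i (ubar i) ≤ ∑ i, J i (v i))) ∧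
      (∀ v : Fin m → ℝ,
        ((((∀ i, lo i < (v i : EReal) ∧ (v i : EReal) < hi i) ∧ ∑ i, v i = d) ∧
          (∀ v' : Fin m → ℝ,
            ((∀ i, lo i < (v' i : EReal) ∧ (v' i : EReal) < hi i) ∧ ∑ i, v' i = d) →
            ∑ i, J i (v i) ≤ ∑ i, J i (v' i)))) → v = ubar)) ↔
      (∃ ηbar : Fin m → ℝ, (∃ c : ℝ, ηbar = fun _ => c) ∧
        (∀ j, 0 = (1 / β) * (K.mulVec (fun _ => (1 : ℝ)) j) * ((∑ i, ubar i) - d)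
            + L.mulVec ηbar j) ∧
        (∀ i, J' i (ubar i) = ηbar i)))
    ∧
    -- Moreover, when (ii) holds the vector η̄ is unique
    (∀ η₁ η₂ : Fin m → ℝ,
      ((∃ c : ℝ, η₁ = fun _ => c) ∧
        (∀ j, 0 = (1 / β) * (K.mulVec (fun _ => (1 : ℝ)) j) * ((∑ i, ubar i) - d)
            + L.mulVec η₁ j) ∧
        (∀ i, J' i (ubar i) = η₁ i)) →
      ((∃ c : ℝ, η₂ = fun _ => c) ∧
        (∀ j, 0 = (1 / β) * (K.mulVec (fun _ => (1 : ℝ)) j) * ((∑ i, ubar i) - d)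
            + L.mulVec η₂ j) ∧
        (∀ i, J' i (ubar i) = η₂ i)) →
      η₁ = η₂) := by
  let s : Fin m → Set ℝ := fun i => ((↑) : ℝ → EReal) ⁻¹' Set.Ioo (lo i) (hi i)
  have hs : ∀ i, (s i).OrdConnected := fun i =>
    Set.ordConnected_Ioo.preimage_mono EReal.coe_strictMono.monotone
  have hs_nhds : ∀ i, s i ∈ nhds (ubar i) := fun i =>
    (isOpen_Ioo.preimage continuous_coe_real_ereal).mem_nhds (hubar i)
  have hJ : ∀ i, ∀ x ∈ s i, HasDerivAt (J i) (J' i x) x := fun i x hx => hderiv i x hx.1 hx.2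
  have hJ' : ∀ i, StrictMonoOn (J' i) (s i) := fun i =>
    strictMonoOn_of_strongly_monotone (hμ i) fun x hx y hy => hconv i x y hx.1 hx.2 hy.1 hy.2
  have hcond := consensus_condition_iff_eq_zero hL1 hwK hβ.ne'
  refine ⟨⟨?_, ?_⟩, ?_⟩
  · rintro ⟨⟨⟨-, hsum⟩, hmin⟩, -⟩
    obtain ⟨c, hc⟩ := exists_deriv_eq_const_of_isMinOn hs_nhds (fun i => hJ i _ (hubar i))
      fun v hv hv_sum => hmin v ⟨hv, hv_sum.trans hsum⟩
    exact ⟨fun _ => c, ⟨c, rfl⟩, (hcond c _).mpr (sub_eq_zero.mpr hsum), hc⟩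
  · rintro ⟨_, ⟨c, rfl⟩, heq, hc⟩
    have hsum : ∑ i, ubar i = d := sub_eq_zero.mp ((hcond c _).mp heq)
    have hlt : ∀ v : Fin m → ℝ, (∀ i, v i ∈ s i) ∧ ∑ i, v i = d → v ≠ ubar →
        ∑ i, J i (ubar i) < ∑ i, J i (v i) := fun v hv hne =>
      sum_lt_sum_of_deriv_eq_const hs hJ hJ' hubar hc hv.1 (hv.2.trans hsum.symm) hne
    refine ⟨⟨⟨hubar, hsum⟩, fun v hv => ?_⟩, fun v ⟨hv, hv_min⟩ => by_contra fun hne => ?_⟩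
    · rcases eq_or_ne v ubar with rfl | hne
      exacts [le_rfl, (hlt v hv hne).le]
    · exact (hv_min ubar ⟨hubar, hsum⟩).not_gt (hlt v hv hne)
  · rintro η₁ η₂ ⟨-, -, h₁⟩ ⟨-, -, h₂⟩
    funext i
    rw [← h₁ i, ← h₂ i]

/-- Paper's Lemma 1 (Distributed Optimality Conditions): `ū` is the unique minimizer of the
resource allocation problem iff there is a (unique) `η̄ ∈ span 𝟙` with
`0 = (1/β) K 𝟙 (𝟙ᵀū − d) + L η̄` and `∇J(ū) = η̄`. -/
theorem dapi_distributed_optimality_conditions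
    (m : ℕ) (hm : 1 ≤ m)
    (lo hi : Fin m → EReal) (hlohi : ∀ i, lo i < hi i)
    (J J' : Fin m → ℝ → ℝ) (μ : Fin m → ℝ) (hμ : ∀ i, 0 < μ i)
    (hderiv : ∀ i, ∀ x : ℝ, lo i < (x : EReal) → (x : EReal) < hi i →
      HasDerivAt (J i) (J' i x) x)
    (hJ'cont : ∀ i, ContinuousOn (J' i) {x : ℝ | lo i < (x : EReal) ∧ (x : EReal) < hi i})
    (hconv : ∀ i, ∀ x y : ℝ, lo i < (x : EReal) → (x : EReal) < hi i →
      lo i < (y : EReal) → (y : EReal) < hi i →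
      μ i * (x - y) ^ 2 ≤ (J' i x - J' i y) * (x - y))
    (hbarrier_lo : ∀ i, ∀ a : ℝ, lo i = (a : EReal) →
      Tendsto (J i) (nhdsWithin a (Set.Ioi a)) atTop)
    (hbarrier_hi : ∀ i, ∀ b : ℝ, hi i = (b : EReal) →
      Tendsto (J i) (nhdsWithin b (Set.Iio b)) atTop)
    (d : ℝ)
    (hfeas : ∃ u : Fin m → ℝ,
      (∀ i, lo i < (u i : EReal) ∧ (u i : EReal) < hi i) ∧ ∑ i, u i = d)
    (L : Matrix (Fin m) (Fin m) ℝ)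
    (hL1 : L.mulVec (fun _ => (1 : ℝ)) = 0)
    (hsimple : ((L.map (Complex.ofReal)).charpoly).rootMultiplicity 0 = 1)
    (w : Fin m → ℝ) (hw0 : w ≠ 0) (hwnn : ∀ i, 0 ≤ w i)
    (hwL : Matrix.vecMul w L = 0)
    (K : Matrix (Fin m) (Fin m) ℝ)
    (hKdiag : ∀ i j, i ≠ j → K i j = 0) (hKnn : ∀ i, 0 ≤ K i i)
    (hwK : 0 < Matrix.vecMul w K ⬝ᵥ (fun _ => (1 : ℝ)))
    (β : ℝ) (hβ : 0 < β)
    (ubar : Fin m → ℝ)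
    (hubar : ∀ i, lo i < (ubar i : EReal) ∧ (ubar i : EReal) < hi i) :
    -- (i) ū is the unique minimizer  ↔  (ii) ∃ η̄ ∈ span 𝟙 satisfying the distributed conditions
    (((((∀ i, lo i < (ubar i : EReal) ∧ (ubar i : EReal) < hi i) ∧ ∑ i, ubar i = d) ∧
        (∀ v : Fin m → ℝ,
          ((∀ i, lo i < (v i : EReal) ∧ (v i : EReal) < hi i) ∧ ∑ i, v i = d) →
          ∑ i, J i (ubar i) ≤ ∑ i, J i (v i))) ∧
      (∀ v : Fin m → ℝ,
        ((((∀ i, lo i < (v i : EReal) ∧ (v i : EReal) < hi i) ∧ ∑ i, v i = d) ∧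
          (∀ v' : Fin m → ℝ,
            ((∀ i, lo i < (v' i : EReal) ∧ (v' i : EReal) < hi i) ∧ ∑ i, v' i = d) →
            ∑ i, J i (v i) ≤ ∑ i, J i (v' i)))) → v = ubar)) ↔
      (∃ ηbar : Fin m → ℝ, (∃ c : ℝ, ηbar = fun _ => c) ∧
        (∀ j, 0 = (1 / β) * (K.mulVec (fun _ => (1 : ℝ)) j) * ((∑ i, ubar i) - d)
            + L.mulVec ηbar j) ∧
        (∀ i, J' i (ubar i) = ηbar i)))
    ∧
    -- Moreover, when (ii) holds the vector η̄ is unique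
    (∀ η₁ η₂ : Fin m → ℝ,
      ((∃ c : ℝ, η₁ = fun _ => c) ∧
        (∀ j, 0 = (1 / β) * (K.mulVec (fun _ => (1 : ℝ)) j) * ((∑ i, ubar i) - d)
            + L.mulVec η₁ j) ∧
        (∀ i, J' i (ubar i) = η₁ i)) →
      ((∃ c : ℝ, η₂ = fun _ => c) ∧
        (∀ j, 0 = (1 / β) * (K.mulVec (fun _ => (1 : ℝ)) j) * ((∑ i, ubar i) - d)
            + L.mulVec η₂ j) ∧
        (∀ i, J' i (ubar i) = η₂ i)) →
      η₁ = η₂) :=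
  dapi_distributed_optimality_conditions_general m lo hi J J' μ hμ hderiv hconv d L hL1 w K hwK β hβ
    ubar hubar
end

section
/- A point ū ∈ ∏_i (u̲_i, ū_i) is a minimizer of the resource allocation problem if and only if Σ_i ū_i = d and there exists λ ∈ ℝ such that J_i'(ū_i) = λ for every i ∈ {1,…,m}. Moreover, such a λ is unique. -/
open Filter

/-! Along the feasible line `t ↦ ū + t (e_i - e_j)` the total cost has derivative
`J_i'(ū_i) - J_j'(ū_j)` at `0`, which vanishes at a minimizer because the box is open.
Conversely, strong monotonicity of `J_i'` makes each `J_i` convex, so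
`J_i v_i ≥ J_i ū_i + λ (v_i - ū_i)`, and summing over `i` the `λ`-terms cancel on the
hyperplane `∑ v_i = d`. -/

theorem monotoneOn_of_mul_sq_le_sub_mul_sub {f : ℝ → ℝ} {s : Set ℝ} {μ : ℝ} (hμ : 0 ≤ μ)
    (hf : ∀ x ∈ s, ∀ y ∈ s, μ * (x - y) ^ 2 ≤ (f x - f y) * (x - y)) : MonotoneOn f s := by
  intro x hx y hy hxy
  rcases hxy.eq_or_lt with rfl | hlt
  · rfl
  · nlinarith [hf y hy x hx, mul_nonneg hμ (sq_nonneg (y - x))]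

theorem MonotoneOn.convexOn_of_hasDerivAt {S : Set ℝ} (hS : Convex ℝ S) {f f' : ℝ → ℝ}
    (hf : ∀ x ∈ S, HasDerivAt f (f' x) x) (hf' : MonotoneOn f' S) : ConvexOn ℝ S f := by
  have hderiv : S.EqOn f' (deriv f) := fun x hx => (hf x hx).deriv.symm
  exact (hf'.congr hderiv).mono interior_subset |>.convexOn_of_deriv hS
    (fun x hx => (hf x hx).continuousAt.continuousWithinAt)
    (fun x hx => (hf x (interior_subset hx)).differentiableAt.differentiableWithinAt)

theorem ConvexOn.add_mul_sub_le_of_hasDerivAt {S : Set ℝ} {f : ℝ → ℝ} {f' x y : ℝ}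
    (hfc : ConvexOn ℝ S f) (hx : x ∈ S) (hy : y ∈ S) (hf : HasDerivAt f f' x) :
    f x + f' * (y - x) ≤ f y := by
  rcases lt_trichotomy x y with hxy | rfl | hyx
  · have := hfc.le_slope_of_hasDerivAt hx hy hxy hf
    rw [slope_def_field, le_div_iff₀ (sub_pos.2 hxy)] at this
    linarith
  · simp
  · have := hfc.slope_le_of_hasDerivAt hy hx hyx hf
    rw [slope_def_field, div_le_iff₀ (sub_pos.2 hyx)] at this
    linarith

namespace ResourceAllocation

variable {ι : Type*} [Fintype ι] {S : ι → Set ℝ} {J : ι → ℝ → ℝ} {g : ι → ℝ} {u : ι → ℝ}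

theorem sum_le_sum_of_hasDerivAt_eq {lam : ℝ} (hJ : ∀ i, ConvexOn ℝ (S i) (J i))
    (hu : ∀ i, u i ∈ S i) (hderiv : ∀ i, HasDerivAt (J i) lam (u i))
    {v : ι → ℝ} (hv : ∀ i, v i ∈ S i) (hsum : ∑ i, v i = ∑ i, u i) :
    ∑ i, J i (u i) ≤ ∑ i, J i (v i) :=
  calc ∑ i, J i (u i) = ∑ i, (J i (u i) + lam * (v i - u i)) := by
        rw [Finset.sum_add_distrib, ← Finset.mul_sum, Finset.sum_sub_distrib, hsum]; ring
    _ ≤ ∑ i, J i (v i) := Finset.sum_le_sum fun i _ =>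
        (hJ i).add_mul_sub_le_of_hasDerivAt (hu i) (hv i) (hderiv i)

theorem sum_mul_eq_zero_of_forall_sum_le (hS : ∀ i, IsOpen (S i)) (hu : ∀ i, u i ∈ S i)
    (hderiv : ∀ i, HasDerivAt (J i) (g i) (u i))
    (hmin : ∀ v : ι → ℝ, (∀ i, v i ∈ S i) → ∑ i, v i = ∑ i, u i →
      ∑ i, J i (u i) ≤ ∑ i, J i (v i))
    {c : ι → ℝ} (hc : ∑ i, c i = 0) : ∑ i, g i * c i = 0 := by
  set φ : ℝ → ℝ := fun t => ∑ i, J i (u i + t * c i)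
  have hline : ∀ i, HasDerivAt (fun t : ℝ => u i + t * c i) (c i) 0 := fun i => by
    simpa using ((hasDerivAt_id (0 : ℝ)).mul_const (c i)).const_add (u i)
  have hφ : HasDerivAt φ (∑ i, g i * c i) 0 :=
    HasDerivAt.fun_sum fun i _ => (hderiv i).comp_of_eq 0 (hline i) (by simp)
  have hmem : ∀ᶠ t in nhds (0 : ℝ), ∀ i, u i + t * c i ∈ S i :=
    eventually_all.2 fun i => (hline i).continuousAt.tendsto.eventually
      ((hS i).mem_nhds (by simpa using hu i))
  have hlocal : IsLocalMin φ 0 := hmem.mono fun t ht => by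
    simpa [φ] using hmin _ ht (by simp [Finset.sum_add_distrib, ← Finset.mul_sum, hc])
  exact hlocal.hasDerivAt_eq_zero hφ

theorem eq_of_forall_sum_le [DecidableEq ι] (hS : ∀ i, IsOpen (S i)) (hu : ∀ i, u i ∈ S i)
    (hderiv : ∀ i, HasDerivAt (J i) (g i) (u i))
    (hmin : ∀ v : ι → ℝ, (∀ i, v i ∈ S i) → ∑ i, v i = ∑ i, u i →
      ∑ i, J i (u i) ≤ ∑ i, J i (v i))
    (i j : ι) : g i = g j := by
  have := sum_mul_eq_zero_of_forall_sum_le hS hu hderiv hmin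
    (c := Pi.single i 1 - Pi.single j 1) (by simp)
  simpa [mul_sub, Finset.sum_sub_distrib, sub_eq_zero, Pi.single_apply] using this

end ResourceAllocation

theorem dapi_kkt_characterization_general
    (m : ℕ) (hm : 1 ≤ m)
    (lo hi : Fin m → EReal)
    (J J' : Fin m → ℝ → ℝ) (μ : Fin m → ℝ) (hμ : ∀ i, 0 < μ i)
    (hderiv : ∀ i, ∀ x : ℝ, lo i < (x : EReal) → (x : EReal) < hi i →
      HasDerivAt (J i) (J' i x) x)
    (hconv : ∀ i, ∀ x y : ℝ, lo i < (x : EReal) → (x : EReal) < hi i →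
      lo i < (y : EReal) → (y : EReal) < hi i →
      μ i * (x - y) ^ 2 ≤ (J' i x - J' i y) * (x - y))
    (d : ℝ)
    (ubar : Fin m → ℝ)
    (hubar : ∀ i, lo i < (ubar i : EReal) ∧ (ubar i : EReal) < hi i) :
    ((∑ i, ubar i = d ∧
        (∀ v : Fin m → ℝ,
          ((∀ i, lo i < (v i : EReal) ∧ (v i : EReal) < hi i) ∧ ∑ i, v i = d) →
          ∑ i, J i (ubar i) ≤ ∑ i, J i (v i))) ↔
      (∑ i, ubar i = d ∧ ∃ lam : ℝ, ∀ i, J' i (ubar i) = lam))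
    ∧
    (∀ lam₁ lam₂ : ℝ, (∀ i, J' i (ubar i) = lam₁) → (∀ i, J' i (ubar i) = lam₂) →
      lam₁ = lam₂) := by
  let S : Fin m → Set ℝ := fun i => {x : ℝ | lo i < (x : EReal) ∧ (x : EReal) < hi i}
  have hSopen : ∀ i, IsOpen (S i) := fun i => isOpen_Ioo.preimage continuous_coe_real_ereal
  have hSconvex : ∀ i, Convex ℝ (S i) := fun i =>
    (Set.ordConnected_Ioo.preimage_mono EReal.coe_strictMono.monotone).convex
  have hJderiv : ∀ i, ∀ x ∈ S i, HasDerivAt (J i) (J' i x) x := fun i x hx => hderiv i x hx.1 hx.2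
  have hJconvex : ∀ i, ConvexOn ℝ (S i) (J i) := fun i =>
    (monotoneOn_of_mul_sq_le_sub_mul_sub (hμ i).le fun x hx y hy =>
      hconv i x y hx.1 hx.2 hy.1 hy.2).convexOn_of_hasDerivAt (hSconvex i) (hJderiv i)
  have hu : ∀ i, ubar i ∈ S i := hubar
  have hJu : ∀ i, HasDerivAt (J i) (J' i (ubar i)) (ubar i) := fun i => hJderiv i _ (hu i)
  let i₀ : Fin m := ⟨0, hm⟩
  refine ⟨⟨fun ⟨hsum, hmin⟩ => ⟨hsum, J' i₀ (ubar i₀), fun i => ?_⟩, fun ⟨hsum, lam, hlam⟩ =>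
    ⟨hsum, fun v ⟨hv, hvsum⟩ => ?_⟩⟩, fun lam₁ lam₂ h₁ h₂ => (h₁ i₀).symm.trans (h₂ i₀)⟩
  · exact ResourceAllocation.eq_of_forall_sum_le hSopen hu hJu
      (fun v hv hvsum => hmin v ⟨hv, hvsum.trans hsum⟩) i i₀
  · exact ResourceAllocation.sum_le_sum_of_hasDerivAt_eq hJconvex hu
      (fun i => hlam i ▸ hJu i) hv (hvsum.trans hsum.symm)

/-- KKT characterization: `ū` is a minimizer of the resource allocation problem iff it is
feasible and the marginal costs `J_i'(ū_i)` share a common value `λ`; moreover `λ` is unique. -/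
theorem dapi_kkt_characterization
    (m : ℕ) (hm : 1 ≤ m)
    (lo hi : Fin m → EReal) (hlohi : ∀ i, lo i < hi i)
    (J J' : Fin m → ℝ → ℝ) (μ : Fin m → ℝ) (hμ : ∀ i, 0 < μ i)
    (hderiv : ∀ i, ∀ x : ℝ, lo i < (x : EReal) → (x : EReal) < hi i →
      HasDerivAt (J i) (J' i x) x)
    (hJ'cont : ∀ i, ContinuousOn (J' i) {x : ℝ | lo i < (x : EReal) ∧ (x : EReal) < hi i})
    (hconv : ∀ i, ∀ x y : ℝ, lo i < (x : EReal) → (x : EReal) < hi i →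
      lo i < (y : EReal) → (y : EReal) < hi i →
      μ i * (x - y) ^ 2 ≤ (J' i x - J' i y) * (x - y))
    (hbarrier_lo : ∀ i, ∀ a : ℝ, lo i = (a : EReal) →
      Tendsto (J i) (nhdsWithin a (Set.Ioi a)) atTop)
    (hbarrier_hi : ∀ i, ∀ b : ℝ, hi i = (b : EReal) →
      Tendsto (J i) (nhdsWithin b (Set.Iio b)) atTop)
    (d : ℝ)
    (hfeas : ∃ u : Fin m → ℝ,
      (∀ i, lo i < (u i : EReal) ∧ (u i : EReal) < hi i) ∧ ∑ i, u i = d)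
    (ubar : Fin m → ℝ)
    (hubar : ∀ i, lo i < (ubar i : EReal) ∧ (ubar i : EReal) < hi i) :
    ((∑ i, ubar i = d ∧
        (∀ v : Fin m → ℝ,
          ((∀ i, lo i < (v i : EReal) ∧ (v i : EReal) < hi i) ∧ ∑ i, v i = d) →
          ∑ i, J i (ubar i) ≤ ∑ i, J i (v i))) ↔
      (∑ i, ubar i = d ∧ ∃ lam : ℝ, ∀ i, J' i (ubar i) = lam))
    ∧
    (∀ lam₁ lam₂ : ℝ, (∀ i, J' i (ubar i) = lam₁) → (∀ i, J' i (ubar i) = lam₂) →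
      lam₁ = lam₂) :=
  dapi_kkt_characterization_general m hm lo hi J J' μ hμ hderiv hconv d ubar hubar
end

section
/- The resource allocation problem has a unique minimizer: there exists exactly one ū ∈ ∏_i (u̲_i, ū_i) with Σ_i ū_i = d such that Σ_i J_i(ū_i) ≤ Σ_i J_i(u_i) for every u ∈ ∏_i (u̲_i, ū_i) with Σ_i u_i = d. -/
/-!
Strong convexity makes each `J i` grow at least quadratically away from any point of its
interval, and the barrier property keeps its sublevel sets away from the finite endpoints, so
these sublevel sets are compact subsets of the open interval. Since every `J i` is then bounded
below, the sublevel sets of `∑ i, J i (u i)` on the feasible hyperplane are compact as well,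
which gives a minimizer; strict convexity of the sum makes it unique.
-/

open Filter Set Topology

theorem ConvexOn.add_deriv_mul_sub_le {S : Set ℝ} {f : ℝ → ℝ} {f' x y : ℝ}
    (hf : ConvexOn ℝ S f) (hx : x ∈ S) (hy : y ∈ S) (hd : HasDerivAt f f' x) :
    f x + f' * (y - x) ≤ f y := by
  rcases lt_trichotomy x y with hxy | rfl | hxy
  · have := hf.le_slope_of_hasDerivAt hx hy hxy hd
    rw [slope_def_field, le_div_iff₀ (sub_pos.mpr hxy)] at this
    linarith
  · simp
  · have := hf.slope_le_of_hasDerivAt hy hx hxy hd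
    rw [slope_def_field, div_le_iff₀ (sub_pos.mpr hxy)] at this
    linarith

theorem StrongConvexOn.add_deriv_mul_sub_add_le {S : Set ℝ} {f : ℝ → ℝ} {μ f' x y : ℝ}
    (hf : StrongConvexOn S μ f) (hx : x ∈ S) (hy : y ∈ S) (hd : HasDerivAt f f' x) :
    f x + f' * (y - x) + μ / 2 * (y - x) ^ 2 ≤ f y := by
  have hg : ConvexOn ℝ S fun z ↦ f z - μ / 2 * z ^ 2 := by
    simpa only [Real.norm_eq_abs, sq_abs] using strongConvexOn_iff_convex.mp hf
  have := hg.add_deriv_mul_sub_le hx hy (hd.sub ((hasDerivAt_pow 2 x).const_mul (μ / 2)))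
  simp only [Nat.cast_ofNat, Nat.add_one_sub_one, pow_one] at this
  linarith

theorem strongConvexOn_of_hasDerivAt {S : Set ℝ} (hS : Convex ℝ S) (hSo : IsOpen S)
    {f f' : ℝ → ℝ} {μ : ℝ} (hf : ∀ x ∈ S, HasDerivAt f (f' x) x)
    (hf' : ∀ x ∈ S, ∀ y ∈ S, μ * (x - y) ^ 2 ≤ (f' x - f' y) * (x - y)) :
    StrongConvexOn S μ f := by
  have hg : ∀ x ∈ S, HasDerivAt (fun z ↦ f z - μ / 2 * z ^ 2) (f' x - μ * x) x := fun x hx ↦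
    ((hf x hx).sub ((hasDerivAt_pow 2 x).const_mul (μ / 2))).congr_deriv (by ring)
  rw [strongConvexOn_iff_convex]
  simp only [Real.norm_eq_abs, sq_abs]
  refine MonotoneOn.convexOn_of_deriv hS (fun x hx ↦ (hg x hx).continuousAt.continuousWithinAt)
    (fun x hx ↦ (hg x (interior_subset hx)).differentiableAt.differentiableWithinAt) ?_
  rw [hSo.interior_eq]
  intro x hx y hy hxy
  rw [(hg x hx).deriv, (hg y hy).deriv]
  rcases hxy.eq_or_lt with rfl | hlt
  · rfl
  · nlinarith [hf' y hy x hx]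

theorem abs_le_of_mul_sq_add_mul_le {μ a b s : ℝ} (hμ : 0 < μ) (h : μ / 2 * s ^ 2 + a * s ≤ b) :
    |s| ≤ max 1 (2 * (|a| + |b|) / μ) := by
  by_contra! hs
  rw [max_lt_iff, div_lt_iff₀ hμ] at hs
  have has : -(a * s) ≤ |a| * |s| := by rw [← abs_mul]; exact neg_le_abs _
  have hbs : b ≤ |b| * |s| := (le_abs_self b).trans (le_mul_of_one_le_right (abs_nonneg b) hs.1.le)
  nlinarith [sq_abs s, abs_nonneg s]

theorem notMem_closure_sublevel_of_tendsto_atTop {X : Type*} [TopologicalSpace X] {f : X → ℝ}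
    {a : X} {s : Set X}
    (hf : Tendsto f (𝓝[s] a) atTop) (t : ℝ) : a ∉ closure {x ∈ s | f x ≤ t} := by
  intro ha
  have := mem_closure_iff_nhdsWithin_neBot.mp ha
  have hle : ∀ᶠ x in 𝓝[{x ∈ s | f x ≤ t}] a, f x ≤ t :=
    eventually_nhdsWithin_of_forall fun x hx ↦ hx.2
  have hgt : ∀ᶠ x in 𝓝[{x ∈ s | f x ≤ t}] a, t < f x :=
    (hf.mono_left (nhdsWithin_mono _ (sep_subset _ _))).eventually_gt_atTop t
  obtain ⟨x, hgt, hle⟩ := (hgt.and hle).exists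
  exact hgt.not_ge hle

theorem StrongConvexOn.isBounded_sublevel {S : Set ℝ} {f : ℝ → ℝ} {μ f' y : ℝ}
    (hf : StrongConvexOn S μ f) (hμ : 0 < μ) (hy : y ∈ S) (hd : HasDerivAt f f' y) (t : ℝ) :
    Bornology.IsBounded {x ∈ S | f x ≤ t} := by
  refine (Metric.isBounded_iff_subset_closedBall y).mpr
    ⟨max 1 (2 * (|f'| + |t - f y|) / μ), fun x hx ↦ ?_⟩
  rw [Metric.mem_closedBall, Real.dist_eq]
  refine abs_le_of_mul_sq_add_mul_le hμ (a := f') (b := t - f y) ?_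
  linarith [hf.add_deriv_mul_sub_add_le hy hx.1 hd, hx.2]

theorem isClosed_sublevel_of_tendsto_atTop {lo hi : EReal} {f : ℝ → ℝ}
    (hf : ContinuousOn f ((↑) ⁻¹' Ioo lo hi))
    (hlo : ∀ a : ℝ, lo = a → Tendsto f (𝓝[>] a) atTop)
    (hhi : ∀ b : ℝ, hi = b → Tendsto f (𝓝[<] b) atTop) (t : ℝ) :
    IsClosed {x ∈ (↑) ⁻¹' Ioo lo hi | f x ≤ t} := by
  refine isClosed_of_closure_subset fun x hx ↦ ?_
  have hlo_lt : lo < x := by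
    refine (closure_lt_subset_le continuous_const continuous_coe_real_ereal
      (closure_mono (fun y hy ↦ hy.1.1) hx)).lt_of_ne fun h ↦ ?_
    refine notMem_closure_sublevel_of_tendsto_atTop (hlo x h) t (closure_mono ?_ hx)
    exact fun y hy ↦ ⟨EReal.coe_lt_coe_iff.mp (h ▸ hy.1.1), hy.2⟩
  have hx_lt : (x : EReal) < hi := by
    refine (closure_lt_subset_le continuous_coe_real_ereal continuous_const
      (closure_mono (fun y hy ↦ hy.1.2) hx)).lt_of_ne fun h ↦ ?_
    refine notMem_closure_sublevel_of_tendsto_atTop (hhi x h.symm) t (closure_mono ?_ hx)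
    exact fun y hy ↦ ⟨EReal.coe_lt_coe_iff.mp (h ▸ hy.1.2), hy.2⟩
  have hxS : x ∈ (↑) ⁻¹' Ioo lo hi := ⟨hlo_lt, hx_lt⟩
  refine ⟨hxS, ContinuousWithinAt.closure_le hx ?_ continuousWithinAt_const fun y hy ↦ hy.2⟩
  exact ((hf x hxS).continuousAt
    ((isOpen_Ioo.preimage continuous_coe_real_ereal).mem_nhds hxS)).continuousWithinAt

theorem isCompact_sublevel_of_barrier {lo hi : EReal} {f f' : ℝ → ℝ} {μ : ℝ} (hμ : 0 < μ)
    (hf : StrongConvexOn ((↑) ⁻¹' Ioo lo hi) μ f)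
    (hd : ∀ x ∈ (↑) ⁻¹' Ioo lo hi, HasDerivAt f (f' x) x)
    (hlo : ∀ a : ℝ, lo = a → Tendsto f (𝓝[>] a) atTop)
    (hhi : ∀ b : ℝ, hi = b → Tendsto f (𝓝[<] b) atTop) (t : ℝ) :
    IsCompact {x ∈ (↑) ⁻¹' Ioo lo hi | f x ≤ t} := by
  rcases eq_empty_or_nonempty {x ∈ (↑) ⁻¹' Ioo lo hi | f x ≤ t} with h | ⟨y, hy, -⟩
  · exact h ▸ isCompact_empty
  refine Metric.isCompact_of_isClosed_isBounded ?_ (hf.isBounded_sublevel hμ hy (hd y hy) t)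
  exact isClosed_sublevel_of_tendsto_atTop
    (fun x hx ↦ (hd x hx).continuousAt.continuousWithinAt) hlo hhi t

theorem exists_isMinOn_of_isCompact_sublevel {X β : Type*} [TopologicalSpace X]
    [LinearOrder β] [TopologicalSpace β] [ClosedIicTopology β] {s : Set X} {f : X → β}
    (hf : ContinuousOn f s) {x₀ : X} (hx₀ : x₀ ∈ s) (hK : IsCompact {x ∈ s | f x ≤ f x₀}) :
    ∃ x ∈ s, IsMinOn f s x := by
  obtain ⟨x, hx, hmin⟩ := hK.exists_isMinOn ⟨x₀, hx₀, le_rfl⟩ (hf.mono (sep_subset _ _))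
  refine ⟨x, hx.1, fun y hy ↦ ?_⟩
  rcases le_total (f y) (f x₀) with hy₀ | hy₀
  · exact hmin ⟨hy, hy₀⟩
  · exact (hmin ⟨hx₀, le_rfl⟩).trans hy₀

theorem StrictConvexOn.existsUnique_isMinOn {E : Type*} [TopologicalSpace E] [AddCommGroup E]
    [Module ℝ E] {s : Set E} {f : E → ℝ} (hf : StrictConvexOn ℝ s f) (hfc : ContinuousOn f s)
    {x₀ : E} (hx₀ : x₀ ∈ s) (hK : IsCompact {x ∈ s | f x ≤ f x₀}) :
    ∃! x, x ∈ s ∧ IsMinOn f s x := by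
  obtain ⟨x, hx, hmin⟩ := exists_isMinOn_of_isCompact_sublevel hfc hx₀ hK
  exact ⟨x, ⟨hx, hmin⟩, fun y hy ↦ hf.eq_of_isMinOn hy.2 hmin hy.1 hx⟩

theorem StrictConvexOn.sum_apply {ι E : Type*} [Fintype ι] [AddCommGroup E] [Module ℝ E]
    {s : ι → Set E} {f : ι → E → ℝ} (hf : ∀ i, StrictConvexOn ℝ (s i) (f i)) :
    StrictConvexOn ℝ (univ.pi s) fun u ↦ ∑ i, f i (u i) := by
  refine ⟨convex_pi fun i _ ↦ (hf i).1, fun u hu v hv huv a b ha hb hab ↦ ?_⟩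
  obtain ⟨i₀, hi₀⟩ := Function.ne_iff.mp huv
  simp only [Pi.add_apply, Pi.smul_apply, smul_eq_mul, Finset.mul_sum, ← Finset.sum_add_distrib]
  refine Finset.sum_lt_sum (fun i _ ↦ ?_) ⟨i₀, Finset.mem_univ _, ?_⟩
  · exact (hf i).convexOn.2 (hu i trivial) (hv i trivial) ha.le hb.le hab
  · exact (hf i₀).2 (hu i₀ trivial) (hv i₀ trivial) hi₀ ha hb hab

theorem continuousOn_sum_apply {ι X : Type*} [Fintype ι] [TopologicalSpace X] {s : ι → Set X}
    {f : ι → X → ℝ} (hf : ∀ i, ContinuousOn (f i) (s i)) :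
    ContinuousOn (fun u ↦ ∑ i, f i (u i)) (univ.pi s) :=
  continuousOn_finsetSum _ fun i _ ↦
    (hf i).comp (continuous_apply i).continuousOn fun _ hu ↦ hu i trivial

theorem isCompact_sublevel_sum_apply {ι X : Type*} [Fintype ι] [TopologicalSpace X] [T2Space X]
    {s : ι → Set X} {f : ι → X → ℝ} {b : ι → ℝ} (hf : ∀ i, ContinuousOn (f i) (s i))
    (hb : ∀ i, ∀ x ∈ s i, b i ≤ f i x) (hK : ∀ i t, IsCompact {x ∈ s i | f i x ≤ t}) (t : ℝ) :
    IsCompact {u ∈ univ.pi s | ∑ i, f i (u i) ≤ t} := by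
  -- on the sublevel set, every summand other than the `i`-th is at least `b j`
  set P := univ.pi fun i ↦ {x ∈ s i | f i x ≤ t - ∑ j, b j + b i}
  have hP : IsCompact P := isCompact_univ_pi fun i ↦ hK i _
  have hPs : P ⊆ univ.pi s := pi_mono fun i _ ↦ sep_subset _ _
  convert hP.of_isClosed_subset
    ((continuousOn_sum_apply hf).mono hPs |>.preimage_isClosed_of_isClosed hP.isClosed isClosed_Iic)
    inter_subset_left using 1
  ext u
  refine ⟨fun ⟨hu, hut⟩ ↦ ⟨fun i _ ↦ ⟨hu i trivial, ?_⟩, hut⟩, fun ⟨hu, hut⟩ ↦ ⟨hPs hu, hut⟩⟩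
  have := Finset.single_le_sum (f := fun j ↦ f j (u j) - b j)
    (fun j _ ↦ sub_nonneg.mpr (hb j _ (hu j trivial))) (Finset.mem_univ i)
  simp only [Finset.sum_sub_distrib] at this
  linarith

theorem dapi_unique_minimizer_general
    (m : ℕ)
    (lo hi : Fin m → EReal)
    (J J' : Fin m → ℝ → ℝ) (μ : Fin m → ℝ) (hμ : ∀ i, 0 < μ i)
    (hderiv : ∀ i, ∀ x : ℝ, lo i < (x : EReal) → (x : EReal) < hi i →
      HasDerivAt (J i) (J' i x) x)
    (hconv : ∀ i, ∀ x y : ℝ, lo i < (x : EReal) → (x : EReal) < hi i →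
      lo i < (y : EReal) → (y : EReal) < hi i →
      μ i * (x - y) ^ 2 ≤ (J' i x - J' i y) * (x - y))
    (hbarrier_lo : ∀ i, ∀ a : ℝ, lo i = (a : EReal) →
      Tendsto (J i) (nhdsWithin a (Set.Ioi a)) atTop)
    (hbarrier_hi : ∀ i, ∀ b : ℝ, hi i = (b : EReal) →
      Tendsto (J i) (nhdsWithin b (Set.Iio b)) atTop)
    (d : ℝ)
    (hfeas : ∃ u : Fin m → ℝ,
      (∀ i, lo i < (u i : EReal) ∧ (u i : EReal) < hi i) ∧ ∑ i, u i = d) :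
    ∃! ubar : Fin m → ℝ,
      ((∀ i, lo i < (ubar i : EReal) ∧ (ubar i : EReal) < hi i) ∧ ∑ i, ubar i = d) ∧
      (∀ v : Fin m → ℝ,
        ((∀ i, lo i < (v i : EReal) ∧ (v i : EReal) < hi i) ∧ ∑ i, v i = d) →
        ∑ i, J i (ubar i) ≤ ∑ i, J i (v i)) := by
  set S : Fin m → Set ℝ := fun i ↦ (↑) ⁻¹' Ioo (lo i) (hi i)
  set A : Set (Fin m → ℝ) := univ.pi S ∩ {u | ∑ i, u i = d}
  set F : (Fin m → ℝ) → ℝ := fun u ↦ ∑ i, J i (u i)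
  have hJ : ∀ i, ∀ x ∈ S i, HasDerivAt (J i) (J' i x) x := fun i x hx ↦ hderiv i x hx.1 hx.2
  have hJc : ∀ i, ContinuousOn (J i) (S i) := fun i x hx ↦
    (hJ i x hx).continuousAt.continuousWithinAt
  have hJs : ∀ i, StrongConvexOn (S i) (μ i) (J i) := fun i ↦
    strongConvexOn_of_hasDerivAt
      (ordConnected_Ioo.preimage_mono EReal.coe_strictMono.monotone).convex
      (isOpen_Ioo.preimage continuous_coe_real_ereal) (hJ i)
      fun x hx y hy ↦ hconv i x y hx.1 hx.2 hy.1 hy.2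
  have hJK : ∀ i t, IsCompact {x ∈ S i | J i x ≤ t} := fun i ↦
    isCompact_sublevel_of_barrier (hμ i) (hJs i) (hJ i) (hbarrier_lo i) (hbarrier_hi i)
  obtain ⟨u₀, hu₀, hsum⟩ := hfeas
  choose xmin _ hJmin using fun i ↦ exists_isMinOn_of_isCompact_sublevel (hJc i) (hu₀ i) (hJK i _)
  have hAc : Convex ℝ A := (convex_pi fun i _ ↦ (hJs i).1).inter <|
    convex_hyperplane ⟨fun _ _ ↦ Finset.sum_add_distrib, fun _ _ ↦ (Finset.mul_sum ..).symm⟩ d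
  have hFs : StrictConvexOn ℝ A F :=
    (StrictConvexOn.sum_apply fun i ↦ (hJs i).strictConvexOn (hμ i)).subset inter_subset_left hAc
  have hFK : IsCompact {u ∈ A | F u ≤ F u₀} := by
    convert (isCompact_sublevel_sum_apply hJc (fun i _ hx ↦ hJmin i hx) hJK (F u₀)).inter_right
      (isClosed_eq (continuous_finsetSum _ fun i _ ↦ continuous_apply i) continuous_const) using 1
    ext u
    simp only [A, mem_inter_iff, mem_ofPred_eq]
    tauto
  have := hFs.existsUnique_isMinOn ((continuousOn_sum_apply hJc).mono inter_subset_left)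
    ⟨fun i _ ↦ hu₀ i, hsum⟩ hFK
  simpa [A, S, isMinOn_iff] using this

/-- The resource allocation problem has a unique minimizer. -/
theorem dapi_unique_minimizer
    (m : ℕ) (hm : 1 ≤ m)
    (lo hi : Fin m → EReal) (hlohi : ∀ i, lo i < hi i)
    (J J' : Fin m → ℝ → ℝ) (μ : Fin m → ℝ) (hμ : ∀ i, 0 < μ i)
    (hderiv : ∀ i, ∀ x : ℝ, lo i < (x : EReal) → (x : EReal) < hi i →
      HasDerivAt (J i) (J' i x) x)
    (hJ'cont : ∀ i, ContinuousOn (J' i) {x : ℝ | lo i < (x : EReal) ∧ (x : EReal) < hi i})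
    (hconv : ∀ i, ∀ x y : ℝ, lo i < (x : EReal) → (x : EReal) < hi i →
      lo i < (y : EReal) → (y : EReal) < hi i →
      μ i * (x - y) ^ 2 ≤ (J' i x - J' i y) * (x - y))
    (hbarrier_lo : ∀ i, ∀ a : ℝ, lo i = (a : EReal) →
      Tendsto (J i) (nhdsWithin a (Set.Ioi a)) atTop)
    (hbarrier_hi : ∀ i, ∀ b : ℝ, hi i = (b : EReal) →
      Tendsto (J i) (nhdsWithin b (Set.Iio b)) atTop)
    (d : ℝ)
    (hfeas : ∃ u : Fin m → ℝ,
      (∀ i, lo i < (u i : EReal) ∧ (u i : EReal) < hi i) ∧ ∑ i, u i = d) :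
    ∃! ubar : Fin m → ℝ,
      ((∀ i, lo i < (ubar i : EReal) ∧ (ubar i : EReal) < hi i) ∧ ∑ i, ubar i = d) ∧
      (∀ v : Fin m → ℝ,
        ((∀ i, lo i < (v i : EReal) ∧ (v i : EReal) < hi i) ∧ ∑ i, v i = d) →
        ∑ i, J i (ubar i) ≤ ∑ i, J i (v i)) :=
  dapi_unique_minimizer_general m lo hi J J' μ hμ hderiv hconv hbarrier_lo hbarrier_hi d hfeas
end

section
/- Let L ∈ ℝ^{m×m} satisfy L𝟙 = 0, suppose 0 is a simple eigenvalue of L (a root of multiplicity one of its characteristic polynomial over ℂ) and every nonzero complex eigenvalue of L has positive real part, and let V⊥ ∈ ℝ^{m×(m−1)} have orthonormal columns spanning {x ∈ ℝ^m : 𝟙ᵀx = 0}. Then every complex eigenvalue of V⊥ᵀ L V⊥ has positive real part; in particular V⊥ᵀ L V⊥ is invertible and −V⊥ᵀ L V⊥ is a Hurwitz matrix. -/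
open Matrix Polynomial

/-! Since `L 𝟙 = 0` and `V Vᵀ = I - 𝟙𝟙ᵀ/m`, we have `L V Vᵀ = L`, so the identity
`X ^ m · χ(Vᵀ (L V)) = X ^ (m - 1) · χ((L V) Vᵀ)` between characteristic polynomials gives
`χ_L = X · χ(Vᵀ L V)`. As `0` is a simple root of `χ_L`, it is not a root of `χ(Vᵀ L V)`, and every
other root of `χ(Vᵀ L V)` is a nonzero eigenvalue of `L`. -/

namespace Matrix

variable {R : Type*} [CommRing R] {l n k : Type*} [Fintype n]

theorem mul_of_const_one_eq_zero {L : Matrix l n R} (hL : L *ᵥ (fun _ => 1) = 0) :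
    L * of (fun (_ : n) (_ : k) => (1 : R)) = 0 := by
  ext i j
  simpa [mul_apply, mulVec, dotProduct] using congrFun hL i

variable [Fintype k] [DecidableEq n] [DecidableEq k]

theorem charpoly_eq_X_pow_mul_charpoly_compress (L : Matrix n n R) (V : Matrix n k R)
    (W : Matrix k n R) (hLVW : L * V * W = L) (hkn : Fintype.card k ≤ Fintype.card n) :
    L.charpoly = X ^ (Fintype.card n - Fintype.card k) * (W * L * V).charpoly := by
  conv_lhs => rw [← hLVW]
  rw [charpoly_mul_comm_of_le _ _ hkn, Matrix.mul_assoc]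

theorem isRoot_charpoly_neg_iff {K : Type*} [Field K] (M : Matrix n n K) (z : K) :
    (-M).charpoly.IsRoot z ↔ M.charpoly.IsRoot (-z) := by
  rw [← mem_spectrum_iff_isRoot_charpoly, ← mem_spectrum_iff_isRoot_charpoly, ← spectrum.neg_eq,
    Set.mem_neg]

end Matrix

theorem Polynomial.not_isRoot_zero_of_rootMultiplicity_X_mul_eq_one {R : Type*} [CommRing R]
    {q : R[X]} (h : (X * q).rootMultiplicity 0 = 1) : ¬ q.IsRoot 0 := by
  have hq : q ≠ 0 := by
    rintro rfl
    simp at h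
  have hmul : (X * q).rootMultiplicity 0 = q.rootMultiplicity 0 + 1 := by
    simpa [mul_comm] using rootMultiplicity_mul_X_sub_C_pow (a := (0 : R)) (n := 1) hq
  rw [← rootMultiplicity_pos hq]
  omega

theorem projected_laplacian_hurwitz_general
    (m : ℕ) (hm : 2 ≤ m)
    (L : Matrix (Fin m) (Fin m) ℝ)
    (hL1 : L.mulVec (fun _ => (1 : ℝ)) = 0)
    (hsimple : ((L.map (Complex.ofReal)).charpoly).rootMultiplicity 0 = 1)
    (hspec : ∀ z : ℂ, ((L.map (Complex.ofReal)).charpoly).IsRoot z → z ≠ 0 → 0 < z.re)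
    (V : Matrix (Fin m) (Fin (m - 1)) ℝ)
    (hVVt : V * Vᵀ = 1 - (m : ℝ)⁻¹ • Matrix.of (fun _ _ => (1 : ℝ))) :
    (∀ z : ℂ, (((Vᵀ * L * V).map (Complex.ofReal)).charpoly).IsRoot z → 0 < z.re) ∧
    IsUnit (Vᵀ * L * V) ∧
    (∀ z : ℂ, (((-(Vᵀ * L * V)).map (Complex.ofReal)).charpoly).IsRoot z → z.re < 0) := by
  have hLVVt : L * V * Vᵀ = L := by
    rw [Matrix.mul_assoc, hVVt, Matrix.mul_sub, Matrix.mul_smul, mul_of_const_one_eq_zero hL1,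
      smul_zero, sub_zero, Matrix.mul_one]
  have hchar : L.charpoly = X * (Vᵀ * L * V).charpoly := by
    have := charpoly_eq_X_pow_mul_charpoly_compress L V Vᵀ hLVVt (by simp)
    rwa [Fintype.card_fin, Fintype.card_fin, show m - (m - 1) = 1 by omega, pow_one] at this
  have hmap {k : Type} [Fintype k] [DecidableEq k] (M : Matrix k k ℝ) :
      (M.map Complex.ofReal).charpoly = M.charpoly.map Complex.ofRealHom :=
    charpoly_map M Complex.ofRealHom
  have hcharC :
      (L.map Complex.ofReal).charpoly = X * ((Vᵀ * L * V).map Complex.ofReal).charpoly := by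
    rw [hmap, hmap, hchar, Polynomial.map_mul, Polynomial.map_X]
  rw [hcharC] at hsimple hspec
  have hzero := not_isRoot_zero_of_rootMultiplicity_X_mul_eq_one hsimple
  have hpos : ∀ z : ℂ, ((Vᵀ * L * V).map Complex.ofReal).charpoly.IsRoot z → 0 < z.re :=
    fun z hz => hspec z (by simp [hz.eq_zero]) (by rintro rfl; exact hzero hz)
  refine ⟨hpos, ?_, fun z hz => ?_⟩
  · by_contra hunit
    rw [← spectrum.zero_mem_iff ℝ, mem_spectrum_iff_isRoot_charpoly] at hunit
    exact hzero (by simpa [hmap] using hunit.map (f := Complex.ofRealHom))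
  · rw [Matrix.map_neg _ Complex.ofReal_neg, isRoot_charpoly_neg_iff] at hz
    simpa using hpos _ hz

/-- If `L𝟙 = 0`, `0` is a simple eigenvalue of `L`, and every nonzero complex eigenvalue of
`L` has positive real part, then every complex eigenvalue of `V⊥ᵀ L V⊥` has positive real
part; in particular `V⊥ᵀ L V⊥` is invertible and `−V⊥ᵀ L V⊥` is Hurwitz. -/
theorem projected_laplacian_hurwitz
    (m : ℕ) (hm : 2 ≤ m)
    (L : Matrix (Fin m) (Fin m) ℝ)
    (hL1 : L.mulVec (fun _ => (1 : ℝ)) = 0)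
    (hsimple : ((L.map (Complex.ofReal)).charpoly).rootMultiplicity 0 = 1)
    (hspec : ∀ z : ℂ, ((L.map (Complex.ofReal)).charpoly).IsRoot z → z ≠ 0 → 0 < z.re)
    (V : Matrix (Fin m) (Fin (m - 1)) ℝ)
    (hVtV : Vᵀ * V = 1)
    (hV1 : Vᵀ.mulVec (fun _ => (1 : ℝ)) = 0)
    (hVVt : V * Vᵀ = 1 - (m : ℝ)⁻¹ • Matrix.of (fun _ _ => (1 : ℝ))) :
    (∀ z : ℂ, (((Vᵀ * L * V).map (Complex.ofReal)).charpoly).IsRoot z → 0 < z.re) ∧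
    IsUnit (Vᵀ * L * V) ∧
    (∀ z : ℂ, (((-(Vᵀ * L * V)).map (Complex.ofReal)).charpoly).IsRoot z → z.re < 0) :=
  projected_laplacian_hurwitz_general m hm L hL1 hsimple hspec V hVVt
end

section
/- Let β, κ, ρ > 0 and let α > βκ²/(4ρ). Suppose V : ℝ → ℝ and W : ℝ^k → ℝ are differentiable, and φ : ℝ → ℝ, ψ : ℝ × ℝ^k → ℝ, f₂ : ℝ^k → ℝ^k satisfy, for all z ∈ ℝ and δ ∈ ℝ^k: V'(z)·φ(z) = −(1/β)·(V'(z))², |ψ(z, δ)| ≤ κ‖δ‖₂, and ∇W(δ)ᵀ f₂(δ) ≤ −ρ‖δ‖₂². Then there exists c > 0 such that for all z ∈ ℝ and δ ∈ ℝ^k, V'(z)·(φ(z) + ψ(z, δ)) + α·∇W(δ)ᵀ f₂(δ) ≤ −c·((V'(z))² + ‖δ‖₂²). (Composite Lyapunov function construction for the nonlinear cascade in the proof of the main theorem.) -/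
/- With `x = |V'(z)|` and `y = ‖δ‖`, the composite derivative is bounded by
`-(1/β) x² + κ x y - α ρ y²`, which is negative definite exactly when `κ² < 4 α ρ / β`,
i.e. when `α > β κ² / (4 ρ)`. -/

theorem quadratic_form_nonneg_of_sq_le {A B κ : ℝ} (hA : 0 < A) (h : κ ^ 2 ≤ 4 * A * B)
    (x y : ℝ) : 0 ≤ A * x ^ 2 - κ * x * y + B * y ^ 2 := by
  have hsq : 4 * A * (A * x ^ 2 - κ * x * y + B * y ^ 2)
      = (2 * A * x - κ * y) ^ 2 + (4 * A * B - κ ^ 2) * y ^ 2 := by ring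
  refine nonneg_of_mul_nonneg_right (a := 4 * A) ?_ (by positivity)
  rw [hsq]
  have := mul_nonneg (sub_nonneg.2 h) (sq_nonneg y)
  positivity

theorem exists_pos_mul_sum_sq_le_quadratic_form {A B κ : ℝ} (hA : 0 < A)
    (h : κ ^ 2 < 4 * A * B) :
    ∃ c : ℝ, 0 < c ∧ ∀ x y : ℝ, c * (x ^ 2 + y ^ 2) ≤ A * x ^ 2 - κ * x * y + B * y ^ 2 := by
  have hB : 0 < B := by nlinarith [sq_nonneg κ]
  set c := (4 * A * B - κ ^ 2) / (4 * (A + B)) with hc_def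
  have hc : 4 * c * (A + B) = 4 * A * B - κ ^ 2 := by
    rw [hc_def]; field_simp
  have hcA : c < A := by nlinarith [sq_nonneg κ]
  -- `4 (A - c) (B - c) = κ² + 4 c²`, so the shifted form still has nonpositive discriminant
  have hshift : κ ^ 2 ≤ 4 * (A - c) * (B - c) := by nlinarith [sq_nonneg c]
  refine ⟨c, div_pos (by linarith) (by positivity), fun x y => ?_⟩
  have := quadratic_form_nonneg_of_sq_le (sub_pos.2 hcA) hshift x y
  linarith

theorem composite_lyapunov_inequality_general
    (k : ℕ)
    (β κ ρ α : ℝ) (hβ : 0 < β) (hρ : 0 < ρ)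
    (hα : β * κ ^ 2 / (4 * ρ) < α)
    (V' : ℝ → ℝ)
    (gradW : EuclideanSpace ℝ (Fin k) → EuclideanSpace ℝ (Fin k))
    (φ : ℝ → ℝ) (ψ : ℝ → EuclideanSpace ℝ (Fin k) → ℝ)
    (f₂ : EuclideanSpace ℝ (Fin k) → EuclideanSpace ℝ (Fin k))
    (hφ : ∀ z : ℝ, V' z * φ z = -(1 / β) * (V' z) ^ 2)
    (hψ : ∀ (z : ℝ) (δ : EuclideanSpace ℝ (Fin k)), |ψ z δ| ≤ κ * ‖δ‖)
    (hf₂ : ∀ δ : EuclideanSpace ℝ (Fin k), (inner ℝ (gradW δ) (f₂ δ) : ℝ) ≤ -ρ * ‖δ‖ ^ 2) :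
    ∃ c : ℝ, 0 < c ∧
      ∀ (z : ℝ) (δ : EuclideanSpace ℝ (Fin k)),
        V' z * (φ z + ψ z δ) + α * (inner ℝ (gradW δ) (f₂ δ) : ℝ)
          ≤ -c * ((V' z) ^ 2 + ‖δ‖ ^ 2) := by
  have hα₀ : 0 ≤ α := le_trans (by positivity) hα.le
  have hdisc : κ ^ 2 < 4 * (1 / β) * (α * ρ) := by
    rw [div_lt_iff₀ (by positivity)] at hα
    rw [show 4 * (1 / β) * (α * ρ) = α * (4 * ρ) / β by field_simp, lt_div_iff₀ hβ]
    linarith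
  obtain ⟨c, hc, hform⟩ := exists_pos_mul_sum_sq_le_quadratic_form (by positivity) hdisc
  refine ⟨c, hc, fun z δ => ?_⟩
  have hcross : V' z * ψ z δ ≤ κ * |V' z| * ‖δ‖ :=
    calc V' z * ψ z δ ≤ |V' z| * |ψ z δ| := (le_abs_self _).trans_eq (abs_mul _ _)
      _ ≤ |V' z| * (κ * ‖δ‖) := mul_le_mul_of_nonneg_left (hψ z δ) (abs_nonneg _)
      _ = κ * |V' z| * ‖δ‖ := by ring
  have hdecay : α * (inner ℝ (gradW δ) (f₂ δ) : ℝ) ≤ -(α * ρ) * ‖δ‖ ^ 2 := by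
    nlinarith [mul_le_mul_of_nonneg_left (hf₂ δ) hα₀]
  have := hform |V' z| ‖δ‖
  rw [sq_abs] at this
  linarith [hφ z]

/-- Composite Lyapunov construction for the nonlinear cascade: if
`V'(z)φ(z) = −(1/β)V'(z)²`, `|ψ(z,δ)| ≤ κ‖δ‖₂` and `∇W(δ)ᵀf₂(δ) ≤ −ρ‖δ‖₂²`, then for any
`α > βκ²/(4ρ)` the composite derivative is negative definite in `(V'(z), ‖δ‖₂)`. -/
theorem composite_lyapunov_inequality
    (k : ℕ) (hk : 1 ≤ k)
    (β κ ρ α : ℝ) (hβ : 0 < β) (hκ : 0 < κ) (hρ : 0 < ρ)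
    (hα : β * κ ^ 2 / (4 * ρ) < α)
    (V V' : ℝ → ℝ)
    (hV : ∀ z : ℝ, HasDerivAt V (V' z) z)
    (W : EuclideanSpace ℝ (Fin k) → ℝ)
    (gradW : EuclideanSpace ℝ (Fin k) → EuclideanSpace ℝ (Fin k))
    (hW : ∀ δ, HasGradientAt W (gradW δ) δ)
    (φ : ℝ → ℝ) (ψ : ℝ → EuclideanSpace ℝ (Fin k) → ℝ)
    (f₂ : EuclideanSpace ℝ (Fin k) → EuclideanSpace ℝ (Fin k))
    (hφ : ∀ z : ℝ, V' z * φ z = -(1 / β) * (V' z) ^ 2)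
    (hψ : ∀ (z : ℝ) (δ : EuclideanSpace ℝ (Fin k)), |ψ z δ| ≤ κ * ‖δ‖)
    (hf₂ : ∀ δ : EuclideanSpace ℝ (Fin k), (inner ℝ (gradW δ) (f₂ δ) : ℝ) ≤ -ρ * ‖δ‖ ^ 2) :
    ∃ c : ℝ, 0 < c ∧
      ∀ (z : ℝ) (δ : EuclideanSpace ℝ (Fin k)),
        V' z * (φ z + ψ z δ) + α * (inner ℝ (gradW δ) (f₂ δ) : ℝ)
          ≤ -c * ((V' z) ^ 2 + ‖δ‖ ^ 2) :=
  composite_lyapunov_inequality_general k β κ ρ α hβ hρ hα V' gradW φ ψ f₂ hφ hψ hf₂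
end

section
/- Let ū ∈ ∏_i (u̲_i, ū_i) be the unique minimizer of the resource allocation problem and let λ ∈ ℝ be the common value J_i'(ū_i) = λ, and set η̄ = λ𝟙. Suppose η : [0,∞) → ℝ^m is continuously differentiable and u : [0,∞) → ∏_i (u̲_i, ū_i) satisfies, for all t ≥ 0 and all i, J_i'(u_i(t)) = η_i(t) and η'(t) = −(1/β) 𝟙 (Σ_{i=1}^m u_i(t) − d) − L η(t). Then η(t) → η̄ and u(t) → ū as t → +∞. (Global attractivity of the optimal point for the reduced DAPI dynamics; the main convergence content of the paper's Theorem 1 after the time-scale separation.) -/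
/-!
Write `𝟙` for the all-ones vector. Since `L𝟙 = 0`, the vector `z = Lη` obeys `z' = -Lz`, and
Cayley–Hamilton gives `q(L) z = 0` for the cofactor `q` in `χ_L = X q`, whose roots are the
nonzero eigenvalues of `L`. Factoring `q` over `ℂ` and peeling off one root `r` at a time leaves
scalar equations `w' = -r w - g` with `Re r > 0` and `g → 0`, so `z → 0`.
As `0` is a simple eigenvalue, `ker L = span 𝟙`, and the spectral projection onto it gives
`η = α 𝟙 + R L η` for a fixed matrix `R` and a consensus value `α = w ⬝ᵥ η` with `wᵀ L = 0`.
Hence `η - α 𝟙 → 0` and `α' = -(1/β) ∑ᵢ (uᵢ - ūᵢ)`. By strong monotonicity of the `Jᵢ'`, this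
sum is bounded away from zero, with the sign of `α - λ`, whenever `α` stays away from `λ`; this
forces `α → λ`, and then `η → λ 𝟙` and `u → ū`.
-/

open Filter Matrix Polynomial Topology Set Module

theorem le_of_hasDerivAt_lt_deriv_boundary {f f' B B' : ℝ → ℝ} {a b : ℝ} (hab : a ≤ b)
    (hf : ∀ x ∈ Icc a b, HasDerivAt f (f' x) x) (hB : ∀ x, HasDerivAt B (B' x) x)
    (ha : f a ≤ B a) (bound : ∀ x ∈ Ico a b, f x = B x → f' x < B' x) : f b ≤ B b :=
  image_le_of_deriv_right_lt_deriv_boundary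
    (fun x hx => (hf x hx).continuousAt.continuousWithinAt)
    (fun x hx => (hf x (Ico_subset_Icc_self hx)).hasDerivWithinAt) ha hB bound ⟨hab, le_rfl⟩

theorem tendsto_zero_of_hasDerivAt_le_neg_mul_add {D D' g : ℝ → ℝ} {p : ℝ} (hp : 0 < p)
    (hD : ∀ t ≥ 0, HasDerivAt D (D' t) t) (hD_nonneg : ∀ t, 0 ≤ D t)
    (hD' : ∀ t ≥ 0, D' t ≤ -p * D t + g t) (hg : Tendsto g atTop (𝓝 0)) :
    Tendsto D atTop (𝓝 0) := by
  refine tendsto_order.2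
    ⟨fun a ha => .of_forall fun t => ha.trans_le (hD_nonneg t), fun ε hε => ?_⟩
  obtain ⟨T, hT⟩ := eventually_atTop.1
    ((hg.eventually_lt_const (by positivity : 0 < p * (ε / 2))).and (eventually_ge_atTop 0))
  have hT₀ : 0 ≤ T := (hT T le_rfl).2
  -- barrier: the solution of `B' = -p (B - ε / 2)` starting from `D T`
  set B : ℝ → ℝ := fun t => ε / 2 + D T * Real.exp (-(p * (t - T)))
  have hB : ∀ t, HasDerivAt B (-p * (B t - ε / 2)) t := fun t => by
    have hlin : HasDerivAt (fun s => -(p * (s - T))) (-(p * 1)) t :=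
      (((hasDerivAt_id' t).sub_const T).const_mul p).neg
    exact ((hlin.exp.const_mul (D T)).const_add (ε / 2)).congr_deriv (by simp only [B]; ring)
  have hDB : ∀ t ≥ T, D t ≤ B t := fun t ht =>
    le_of_hasDerivAt_lt_deriv_boundary ht (fun s hs => hD s (hT₀.trans hs.1)) hB
      (by simp only [B, sub_self, mul_zero, neg_zero, Real.exp_zero, mul_one]; linarith)
      fun s hs hDs => by
        have hDs' := hD' s (hT₀.trans hs.1)
        rw [hDs] at hDs'
        linarith [(hT s hs.1).1]
  have hBlim : Tendsto B atTop (𝓝 (ε / 2 + D T * 0)) :=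
    ((Real.tendsto_exp_neg_atTop_nhds_zero.comp ((tendsto_atTop_add_const_right _ (-T)
      tendsto_id).const_mul_atTop hp)).const_mul _).const_add _
  rw [mul_zero, add_zero] at hBlim
  filter_upwards [hBlim.eventually_lt_const (half_lt_self hε), eventually_ge_atTop T] with t hBt ht
  exact (hDB t ht).trans_lt hBt

open scoped RealInnerProductSpace in
theorem tendsto_zero_of_hasDerivAt_neg_sub {E : Type*} [NormedAddCommGroup E]
    [InnerProductSpace ℝ E] {A : E → E} {p : ℝ} (hp : 0 < p) (hA : ∀ x, p * ‖x‖ ^ 2 ≤ ⟪x, A x⟫)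
    {u g : ℝ → E} (hu : ∀ t ≥ 0, HasDerivAt u (-A (u t) - g t) t) (hg : Tendsto g atTop (𝓝 0)) :
    Tendsto u atTop (𝓝 0) := by
  have hD : Tendsto (‖u ·‖ ^ 2) atTop (𝓝 0) := by
    refine tendsto_zero_of_hasDerivAt_le_neg_mul_add hp (fun t ht => (hu t ht).norm_sq)
      (fun t => by positivity) (g := fun t => ‖g t‖ ^ 2 / p) (fun t _ => ?_) ?_
    · have hAu := hA (u t)
      have hug := neg_le_of_abs_le (abs_real_inner_le_norm (u t) (g t))
      have hyoung : 2 * (‖u t‖ * ‖g t‖) ≤ p * ‖u t‖ ^ 2 + ‖g t‖ ^ 2 / p := by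
        have : p * ‖u t‖ ^ 2 + ‖g t‖ ^ 2 / p - 2 * (‖u t‖ * ‖g t‖) =
            (p * ‖u t‖ - ‖g t‖) ^ 2 / p := by
          field_simp
          ring
        linarith [show 0 ≤ (p * ‖u t‖ - ‖g t‖) ^ 2 / p by positivity]
      rw [inner_sub_right, inner_neg_right]
      linarith
    · simpa using (hg.norm.pow 2).div_const p
  simpa [Real.sqrt_sq (norm_nonneg _), tendsto_zero_iff_norm_tendsto_zero] using hD.sqrt

theorem Complex.tendsto_zero_of_hasDerivAt_neg_mul_sub {r : ℂ} (hr : 0 < r.re) {u g : ℝ → ℂ}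
    (hu : ∀ t ≥ 0, HasDerivAt u (-(r * u t) - g t) t) (hg : Tendsto g atTop (𝓝 0)) :
    Tendsto u atTop (𝓝 0) :=
  tendsto_zero_of_hasDerivAt_neg_sub hr (fun x => by
    rw [Complex.inner, mul_assoc, Complex.mul_conj, Complex.re_mul_ofReal,
      Complex.normSq_eq_norm_sq]) hu hg

theorem HasDerivAt.matrix_mulVec {𝕜 n : Type*} [RCLike 𝕜] [Fintype n] (M : Matrix n n 𝕜)
    {v : ℝ → n → 𝕜} {v' : n → 𝕜} {t : ℝ} (hv : HasDerivAt v v' t) :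
    HasDerivAt (fun s => M *ᵥ v s) (M *ᵥ v') t :=
  ((mulVecLin M).toContinuousLinearMap.restrictScalars ℝ).hasFDerivAt.comp_hasDerivAt t hv

theorem HasDerivAt.const_dotProduct {n : Type*} [Fintype n] (w : n → ℝ) {v : ℝ → n → ℝ}
    {v' : n → ℝ} {t : ℝ} (hv : HasDerivAt v v' t) :
    HasDerivAt (fun s => w ⬝ᵥ v s) (w ⬝ᵥ v') t := by
  simpa [dotProduct] using HasDerivAt.fun_sum fun i _ => (hasDerivAt_pi.1 hv i).const_mul (w i)

theorem HasDerivAt.dotProduct_of_vecMul_eq_zero {n : Type*} [Fintype n] {L : Matrix n n ℝ}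
    {w : n → ℝ} (hw1 : w ⬝ᵥ 1 = 1) (hwL : w ᵥ* L = 0) {v : ℝ → n → ℝ} {c t : ℝ}
    (hv : HasDerivAt v (c • 1 - L *ᵥ v t) t) : HasDerivAt (w ⬝ᵥ v ·) c t :=
  (hv.const_dotProduct w).congr_deriv <| by
    rw [dotProduct_sub, dotProduct_smul, hw1, dotProduct_mulVec, hwL, zero_dotProduct,
      smul_eq_mul, mul_one, sub_zero]

theorem Polynomial.exists_eq_X_mul_of_rootMultiplicity_zero_eq_one {R : Type*} [CommRing R]
    {p : R[X]} (hp : p.rootMultiplicity 0 = 1) : ∃ q, p = X * q ∧ q.eval 0 ≠ 0 := by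
  have hp0 : p ≠ 0 := by
    rintro rfl
    simp at hp
  obtain ⟨q, hq, hXq⟩ := p.exists_eq_pow_rootMultiplicity_mul_and_not_dvd hp0 0
  refine ⟨q, by simpa [hp] using hq, ?_⟩
  simpa [X_dvd_iff, coeff_zero_eq_eval_zero] using hXq

namespace Matrix

theorem map_ofReal_mulVec {n : Type*} [Fintype n] (L : Matrix n n ℝ) (v : n → ℝ) :
    L.map Complex.ofReal *ᵥ (fun i => (v i : ℂ)) = fun i => ((L *ᵥ v) i : ℂ) :=
  funext fun i => (RingHom.map_mulVec Complex.ofRealHom L v i).symm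

variable {n : Type*} [Fintype n] [DecidableEq n]

theorem tendsto_zero_of_hasDerivAt_neg_mulVec_of_aeval_prod (M : Matrix n n ℂ) {v : ℝ → n → ℂ}
    (hv : ∀ t ≥ 0, HasDerivAt v (-(M *ᵥ v t)) t) (s : Multiset ℂ) (hs : ∀ r ∈ s, 0 < r.re)
    (h : Tendsto (fun t => aeval M (s.map fun r => X - C r).prod *ᵥ v t) atTop (𝓝 0)) :
    Tendsto v atTop (𝓝 0) := by
  induction s using Multiset.induction_on with
  | empty => simpa using h
  | cons r s ih =>
    refine ih (fun r' hr' => hs r' (Multiset.mem_cons_of_mem hr')) ?_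
    set P := aeval M (s.map fun r => X - C r).prod
    have hPM : P * M = M * P := by
      simpa using ((Commute.all (s.map fun r => X - C r).prod X).map (aeval M : ℂ[X] →ₐ[ℂ] _)).eq
    set w := fun t => P *ᵥ v t
    have hw : ∀ t ≥ 0, ∀ i, HasDerivAt (w · i) (-(r * w t i) - ((M - r • 1) *ᵥ w t) i) t := by
      intro t ht i
      refine hasDerivAt_pi.1 ((hv t ht).matrix_mulVec P) i |>.congr_deriv ?_
      simp only [w, mulVec_neg, mulVec_mulVec, hPM, sub_mul, sub_mulVec, smul_mul, one_mul,
        smul_mulVec, Pi.neg_apply, Pi.sub_apply, Pi.smul_apply, smul_eq_mul]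
      ring
    refine tendsto_pi_nhds.2 fun i => Complex.tendsto_zero_of_hasDerivAt_neg_mul_sub
      (hs r (Multiset.mem_cons_self r s)) (hw · · i) ?_
    simpa [mulVec_mulVec, w, Algebra.algebraMap_eq_smul_one] using tendsto_pi_nhds.1 h i

theorem tendsto_zero_of_hasDerivAt_neg_mulVec (M : Matrix n n ℂ) {v : ℝ → n → ℂ}
    (hv : ∀ t ≥ 0, HasDerivAt v (-(M *ᵥ v t)) t) {q : ℂ[X]} (hq : q ≠ 0)
    (hroots : ∀ r ∈ q.roots, 0 < r.re) (hqv : ∀ t, aeval M q *ᵥ v t = 0) :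
    Tendsto v atTop (𝓝 0) := by
  refine tendsto_zero_of_hasDerivAt_neg_mulVec_of_aeval_prod M hv q.roots hroots
    (tendsto_const_nhds.congr fun t => ?_)
  have hqv := hqv t
  rw [← C_leadingCoeff_mul_prod_multiset_X_sub_C (IsAlgClosed.card_roots_eq_natDegree (p := q)),
    map_mul, aeval_C, Algebra.algebraMap_eq_smul_one, smul_mul, one_mul, smul_mulVec,
    smul_eq_zero] at hqv
  exact (hqv.resolve_left (leadingCoeff_ne_zero.2 hq)).symm

theorem tendsto_mulVec_zero_of_hasDerivAt {L : Matrix n n ℝ} (hL1 : L *ᵥ 1 = 0)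
    (hsimple : (L.map Complex.ofReal).charpoly.rootMultiplicity 0 = 1)
    (hspec : ∀ z : ℂ, (L.map Complex.ofReal).charpoly.IsRoot z → z ≠ 0 → 0 < z.re)
    {c : ℝ → ℝ} {η : ℝ → n → ℝ} (hη : ∀ t ≥ 0, HasDerivAt η (c t • 1 - L *ᵥ η t) t) :
    Tendsto (fun t => L *ᵥ η t) atTop (𝓝 0) := by
  set Lc := L.map Complex.ofReal
  obtain ⟨q, hq, hq0⟩ := Polynomial.exists_eq_X_mul_of_rootMultiplicity_zero_eq_one hsimple
  set Z : ℝ → n → ℂ := fun t => Lc *ᵥ fun i => (η t i : ℂ)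
  have hZ_eq : ∀ t, Z t = fun i => ((L *ᵥ η t) i : ℂ) := fun t => map_ofReal_mulVec L (η t)
  have hZ : ∀ t ≥ 0, HasDerivAt Z (-(Lc *ᵥ Z t)) t := fun t ht => by
    have hηc : HasDerivAt (fun s i => (η s i : ℂ)) ((c t : ℂ) • 1 - Z t) t :=
      hasDerivAt_pi.2 fun i => by
        simpa [hZ_eq] using (hasDerivAt_pi.1 (hη t ht) i).ofReal_comp
    have hLc1 : Lc *ᵥ 1 = 0 := by
      have := map_ofReal_mulVec L 1
      simp only [Pi.one_apply, Complex.ofReal_one, hL1, Pi.zero_apply, Complex.ofReal_zero] at this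
      exact this
    refine (hηc.matrix_mulVec Lc).congr_deriv ?_
    rw [mulVec_sub, mulVec_smul, hLc1]
    simp
  have hZ0 : Tendsto Z atTop (𝓝 0) := by
    refine tendsto_zero_of_hasDerivAt_neg_mulVec Lc hZ (q := q) ?_ ?_ fun t => ?_
    · rintro rfl
      simp at hq0
    · intro r hr
      rw [mem_roots', IsRoot.def] at hr
      refine hspec r (by simp [hq, hr.2]) ?_
      rintro rfl
      exact hq0 hr.2
    · have hqL : aeval Lc q * Lc = 0 := by
        rw [← aeval_self_charpoly Lc, hq, mul_comm, map_mul, aeval_X]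
      rw [mulVec_mulVec, hqL, zero_mulVec]
  refine tendsto_pi_nhds.2 fun i => ?_
  simpa [hZ_eq, Function.comp_def] using
    (Complex.continuous_re.tendsto 0).comp (tendsto_pi_nhds.1 hZ0 i)

variable {K : Type*} [Field K] {L : Matrix n n K}

theorem finrank_ker_toLin'_le_rootMultiplicity :
    finrank K (LinearMap.ker (toLin' L)) ≤ L.charpoly.rootMultiplicity 0 := by
  rw [← Module.End.eigenspace_zero, ← charpoly_toLin' L]
  exact LinearMap.finrank_eigenspace_le (toLin' L) 0

theorem span_one_le_ker_toLin' (hL1 : L *ᵥ 1 = 0) : K ∙ 1 ≤ LinearMap.ker (toLin' L) := by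
  simpa [Submodule.span_singleton_le_iff_mem] using hL1

variable [Nonempty n]

theorem one_le_rootMultiplicity_charpoly_zero (hL1 : L *ᵥ 1 = 0) :
    1 ≤ L.charpoly.rootMultiplicity 0 :=
  calc 1 = finrank K (K ∙ (1 : n → K)) := (finrank_span_singleton one_ne_zero).symm
    _ ≤ _ := Submodule.finrank_mono (span_one_le_ker_toLin' hL1)
    _ ≤ _ := finrank_ker_toLin'_le_rootMultiplicity

theorem ker_toLin'_eq_span_one (hL1 : L *ᵥ 1 = 0) (hmult : L.charpoly.rootMultiplicity 0 ≤ 1) :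
    LinearMap.ker (toLin' L) = K ∙ 1 :=
  (Submodule.eq_of_le_of_finrank_le (span_one_le_ker_toLin' hL1) <|
    finrank_ker_toLin'_le_rootMultiplicity.trans <| hmult.trans_eq
      (finrank_span_singleton one_ne_zero).symm).symm

theorem rootMultiplicity_charpoly_zero_eq_one_of_map_ofReal {L : Matrix n n ℝ}
    (hL1 : L *ᵥ 1 = 0) (hsimple : (L.map Complex.ofReal).charpoly.rootMultiplicity 0 = 1) :
    L.charpoly.rootMultiplicity 0 = 1 := by
  refine le_antisymm ?_ (one_le_rootMultiplicity_charpoly_zero hL1)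
  have := le_rootMultiplicity_map (f := algebraMap ℝ ℂ) ?_ (0 : ℝ) (p := L.charpoly)
  · rwa [map_zero, ← charpoly_map, Complex.coe_algebraMap, hsimple] at this
  · exact ((charpoly_monic L).map _).ne_zero

theorem exists_eq_dotProduct_smul_one_add_mulVec (hL1 : L *ᵥ 1 = 0)
    (hmult : L.charpoly.rootMultiplicity 0 = 1) :
    ∃ (w : n → K) (R : Matrix n n K),
      w ⬝ᵥ 1 = 1 ∧ w ᵥ* L = 0 ∧ ∀ v, v = (w ⬝ᵥ v) • 1 + R *ᵥ (L *ᵥ v) := by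
  obtain ⟨q, hq, hq0⟩ := Polynomial.exists_eq_X_mul_of_rootMultiplicity_zero_eq_one hmult
  have hLq : L * aeval L q = 0 := by rw [← aeval_self_charpoly L, hq, map_mul, aeval_X]
  have hqL : aeval L q * L = 0 := by rw [← aeval_self_charpoly L, hq, mul_comm, map_mul, aeval_X]
  have hq_split : aeval L q = aeval L q.divX * L + q.eval 0 • 1 := by
    conv_lhs => rw [← divX_mul_X_add q]
    simp [coeff_zero_eq_eval_zero, Algebra.algebraMap_eq_smul_one]
  -- `P` is the spectral projection onto `ker L` along `range L`
  set P := (q.eval 0)⁻¹ • aeval L q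
  have hP1 : P *ᵥ 1 = 1 := by
    rw [smul_mulVec, hq_split, add_mulVec, ← mulVec_mulVec, hL1, smul_mulVec, one_mulVec]
    simp [smul_smul, hq0]
  have hPv : ∀ v, P *ᵥ v ∈ K ∙ (1 : n → K) := fun v => by
    rw [← ker_toLin'_eq_span_one hL1 hmult.le]
    simp [P, mulVec_mulVec, hLq]
  set i₀ := Classical.arbitrary n
  refine ⟨P i₀, -((q.eval 0)⁻¹ • aeval L q.divX), congrFun hP1 i₀, ?_, fun v => ?_⟩
  · have hPL : P * L = 0 := by rw [smul_mul_assoc, hqL, smul_zero]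
    funext j
    simpa [vecMul, dotProduct, mul_apply] using congrFun (congrFun hPL i₀) j
  · obtain ⟨c, hc⟩ := Submodule.mem_span_singleton.1 (hPv v)
    have hPv' : P *ᵥ v = (P i₀ ⬝ᵥ v) • 1 := by
      change P *ᵥ v = (P *ᵥ v) i₀ • 1
      rw [← hc]
      simp
    have hPR : P + -((q.eval 0)⁻¹ • aeval L q.divX) * L = 1 := by
      simp [P, hq_split, smul_add, smul_smul, hq0]
    rw [← hPv', mulVec_mulVec, ← add_mulVec, hPR, one_mulVec]

end Matrix

theorem eventually_le_of_hasDerivAt_le_neg {α g : ℝ → ℝ} {a c : ℝ} (hc : 0 < c)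
    (hα : ∀ t ≥ 0, HasDerivAt α (g t) t) (hg : ∀ᶠ t in atTop, a ≤ α t → g t ≤ -c) :
    ∀ᶠ t in atTop, α t ≤ a := by
  obtain ⟨T, hT⟩ := eventually_atTop.1 (hg.and (eventually_ge_atTop 0))
  have hαT : ∀ s ≥ T, HasDerivAt α (g s) s := fun s hs => hα s (hT s hs).2
  -- while above `a`, `α` decreases at rate at least `c`, so it gets below `a` at some `T₁`
  obtain ⟨T₁, hT₁, hαT₁⟩ : ∃ T₁ ≥ T, α T₁ ≤ a := by
    by_contra! habove
    set T₁ := T + 2 * (α T - a) / c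
    have hTT₁ : T ≤ T₁ :=
      le_add_of_nonneg_right (div_nonneg (by linarith [habove T le_rfl]) hc.le)
    have := le_of_hasDerivAt_lt_deriv_boundary (B := fun s => α T - c / 2 * (s - T))
      (B' := fun _ => -(c / 2)) hTT₁ (fun s hs => hαT s hs.1)
      (fun s => by
        simpa using ((hasDerivAt_id' s).sub_const T).const_mul (c / 2) |>.const_sub (α T))
      (by simp) (fun s hs _ => by linarith [(hT s hs.1).1 (habove s hs.1).le])
    have : α T - c / 2 * (T₁ - T) = a := by
      simp only [T₁]
      field_simp
      ring
    linarith [habove T₁ hTT₁]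
  -- and it never crosses `a` upwards afterwards
  filter_upwards [eventually_ge_atTop T₁] with t ht
  exact le_of_hasDerivAt_lt_deriv_boundary (B := fun _ => a) (B' := fun _ => 0) ht
    (fun s hs => hαT s (hT₁.trans hs.1)) (fun _ => hasDerivAt_const _ _) hαT₁
    (fun s hs hs_eq => by linarith [(hT s (hT₁.trans hs.1)).1 hs_eq.ge])

theorem tendsto_of_hasDerivAt_of_restoring {α g : ℝ → ℝ} {a : ℝ}
    (hα : ∀ t ≥ 0, HasDerivAt α (g t) t)
    (hg : ∀ ε > 0, ∃ c > 0, ∀ᶠ t in atTop, (a + ε ≤ α t → g t ≤ -c) ∧ (α t ≤ a - ε → c ≤ g t)) :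
    Tendsto α atTop (𝓝 a) := by
  refine tendsto_order.2 ⟨fun a' ha' => ?_, fun a' ha' => ?_⟩
  · obtain ⟨c, hc, hcg⟩ := hg ((a - a') / 2) (by linarith)
    have := eventually_le_of_hasDerivAt_le_neg (α := (-α ·)) (g := (-g ·))
      (a := -(a - (a - a') / 2)) hc (fun t ht => (hα t ht).neg)
      (hcg.mono fun t ht h => by linarith [ht.2 (by linarith)])
    exact this.mono fun t ht => by linarith
  · obtain ⟨c, hc, hcg⟩ := hg ((a' - a) / 2) (by linarith)
    have := eventually_le_of_hasDerivAt_le_neg hc hα (hcg.mono fun t ht => ht.1)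
    exact this.mono fun t ht => by linarith

theorem StrictMonoOn.exists_pos_forall_add_le {f : ℝ → ℝ} {S : Set ℝ} {x₀ : ℝ}
    (hf : StrictMonoOn f S) (hS : S ∈ 𝓝 x₀) (hcont : ContinuousAt f x₀) {ε : ℝ} (hε : 0 < ε) :
    ∃ δ > 0, ∀ x ∈ S, (f x₀ + ε ≤ f x → x₀ + δ ≤ x) ∧ (f x ≤ f x₀ - ε → x ≤ x₀ - δ) := by
  have hnear : ∀ᶠ y in 𝓝 x₀, (f y < f x₀ + ε ∧ f x₀ - ε < f y) ∧ y ∈ S :=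
    ((hcont.eventually_lt_const (by linarith)).and (hcont.eventually_const_lt (by linarith))).and hS
  obtain ⟨r, hr, hball⟩ := Metric.eventually_nhds_iff.1 hnear
  have hplus := hball (y := x₀ + r / 2) (by rw [Real.dist_eq, abs_of_pos] <;> linarith)
  have hminus := hball (y := x₀ - r / 2) (by rw [Real.dist_eq, abs_of_neg] <;> linarith)
  refine ⟨r / 2, half_pos hr, fun x hx => ⟨fun hfx => ?_, fun hfx => ?_⟩⟩
  · by_contra! hlt
    linarith [hf hx hplus.2 hlt, hplus.1.1]
  · by_contra! hlt
    linarith [hf hminus.2 hx hlt, hminus.1.2]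

theorem exists_pos_forall_le_sum_sub {ι : Type*} [Fintype ι] [Nonempty ι] {f : ι → ℝ → ℝ}
    {S : ι → Set ℝ} {x₀ : ι → ℝ} {a : ℝ} (hf : ∀ i, StrictMonoOn (f i) (S i))
    (hS : ∀ i, S i ∈ 𝓝 (x₀ i)) (hcont : ∀ i, ContinuousAt (f i) (x₀ i))
    (hfx₀ : ∀ i, f i (x₀ i) = a) {ε : ℝ} (hε : 0 < ε) :
    ∃ c > 0, ∀ x : ι → ℝ, (∀ i, x i ∈ S i) →
      ((∀ i, a + ε ≤ f i (x i)) → c ≤ ∑ i, (x i - x₀ i)) ∧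
      ((∀ i, f i (x i) ≤ a - ε) → ∑ i, (x i - x₀ i) ≤ -c) := by
  choose δ hδ hδx using fun i => (hf i).exists_pos_forall_add_le (hS i) (hcont i) hε
  refine ⟨∑ i, δ i, Finset.sum_pos (fun i _ => hδ i) Finset.univ_nonempty,
    fun x hx => ⟨fun hup => ?_, fun hdown => ?_⟩⟩
  · refine Finset.sum_le_sum fun i _ => ?_
    have := (hδx i (x i) (hx i)).1 (by rw [hfx₀]; exact hup i)
    linarith
  · rw [← Finset.sum_neg_distrib]
    refine Finset.sum_le_sum fun i _ => ?_
    have := (hδx i (x i) (hx i)).2 (by rw [hfx₀]; exact hdown i)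
    linarith

theorem tendsto_of_hasDerivAt_neg_mul_sum_sub {ι : Type*} [Fintype ι] [Nonempty ι]
    {f : ι → ℝ → ℝ} {S : ι → Set ℝ} {x₀ : ι → ℝ} {a : ℝ} (hf : ∀ i, StrictMonoOn (f i) (S i))
    (hS : ∀ i, S i ∈ 𝓝 (x₀ i)) (hcont : ∀ i, ContinuousAt (f i) (x₀ i))
    (hfx₀ : ∀ i, f i (x₀ i) = a) {κ : ℝ} (hκ : 0 < κ) {α : ℝ → ℝ} {x e : ℝ → ι → ℝ}
    (hα : ∀ t ≥ 0, HasDerivAt α (-κ * ∑ i, (x t i - x₀ i)) t)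
    (hx : ∀ᶠ t in atTop, ∀ i, x t i ∈ S i ∧ f i (x t i) = α t + e t i)
    (he : Tendsto e atTop (𝓝 0)) :
    Tendsto α atTop (𝓝 a) := by
  refine tendsto_of_hasDerivAt_of_restoring hα fun ε hε => ?_
  obtain ⟨c, hc, hcx⟩ := exists_pos_forall_le_sum_sub hf hS hcont hfx₀ (half_pos hε)
  have he_small : ∀ᶠ t in atTop, ∀ i, |e t i| ≤ ε / 2 := eventually_all.2 fun i => by
    simpa [Real.dist_eq] using
      (tendsto_pi_nhds.1 he i).eventually (Metric.closedBall_mem_nhds 0 (half_pos hε))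
  refine ⟨κ * c, mul_pos hκ hc, ?_⟩
  filter_upwards [hx, he_small] with t hxt het
  obtain ⟨hup, hdown⟩ := hcx (x t) (fun i => (hxt i).1)
  constructor
  · intro hαt
    have := hup fun i => by linarith [(hxt i).2, (abs_le.1 (het i)).1]
    nlinarith
  · intro hαt
    have := hdown fun i => by linarith [(hxt i).2, (abs_le.1 (het i)).2]
    nlinarith

theorem strictMonoOn_of_mul_sq_le {f : ℝ → ℝ} {S : Set ℝ} {μ : ℝ} (hμ : 0 < μ)
    (h : ∀ x ∈ S, ∀ y ∈ S, μ * (x - y) ^ 2 ≤ (f x - f y) * (x - y)) : StrictMonoOn f S := by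
  intro x hx y hy hxy
  have := h x hx y hy
  nlinarith [mul_pos hμ (pow_pos (sub_pos.2 hxy) 2)]

theorem mul_abs_le_abs_of_mul_sq_le {μ a b : ℝ} (h : μ * a ^ 2 ≤ b * a) : μ * |a| ≤ |b| := by
  rcases eq_or_ne a 0 with rfl | ha
  · simp
  · have : μ * |a| * |a| ≤ |b| * |a| := by
      rw [mul_assoc, abs_mul_abs_self, ← abs_mul]
      exact (sq a ▸ h).trans (le_abs_self _)
    exact le_of_mul_le_mul_right this (abs_pos.2 ha)

theorem tendsto_of_mul_sq_le {x y : ℝ → ℝ} {x₀ y₀ μ : ℝ} (hμ : 0 < μ)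
    (h : ∀ᶠ t in atTop, μ * (x t - x₀) ^ 2 ≤ (y t - y₀) * (x t - x₀))
    (hy : Tendsto y atTop (𝓝 y₀)) : Tendsto x atTop (𝓝 x₀) := by
  rw [← tendsto_sub_nhds_zero_iff]
  refine squeeze_zero_norm' (a := fun t => |y t - y₀| / μ) (h.mono fun t ht => ?_) ?_
  · rw [Real.norm_eq_abs, le_div_iff₀' hμ]
    exact mul_abs_le_abs_of_mul_sq_le ht
  · simpa using (hy.sub_const y₀).abs.div_const μ

theorem dapi_reduced_dynamics_global_attractivity_general
    (m : ℕ) (hm : 2 ≤ m)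
    (lo hi : Fin m → EReal)
    (J' : Fin m → ℝ → ℝ) (μ : Fin m → ℝ) (hμ : ∀ i, 0 < μ i)
    (hJ'cont : ∀ i, ContinuousOn (J' i) {x : ℝ | lo i < (x : EReal) ∧ (x : EReal) < hi i})
    (hconv : ∀ i, ∀ x y : ℝ, lo i < (x : EReal) → (x : EReal) < hi i →
      lo i < (y : EReal) → (y : EReal) < hi i →
      μ i * (x - y) ^ 2 ≤ (J' i x - J' i y) * (x - y))
    (d : ℝ)
    (L : Matrix (Fin m) (Fin m) ℝ)
    (hL1 : L.mulVec (fun _ => (1 : ℝ)) = 0)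
    (hsimple : ((L.map (Complex.ofReal)).charpoly).rootMultiplicity 0 = 1)
    (hspec : ∀ z : ℂ, ((L.map (Complex.ofReal)).charpoly).IsRoot z → z ≠ 0 → 0 < z.re)
    (β : ℝ) (hβ : 0 < β)
    -- ū is the unique minimizer of the resource allocation problem
    (ubar : Fin m → ℝ)
    (hubar_mem : ∀ i, lo i < (ubar i : EReal) ∧ (ubar i : EReal) < hi i)
    (hubar_sum : ∑ i, ubar i = d)
    -- λ is the common marginal cost at ū, and η̄ = λ𝟙
    (lam : ℝ) (hlam : ∀ i, J' i (ubar i) = lam)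
    -- trajectories of the reduced DAPI dynamics
    (η : ℝ → (Fin m → ℝ)) (u : ℝ → (Fin m → ℝ))
    (hu_mem : ∀ t : ℝ, 0 ≤ t → ∀ i, lo i < (u t i : EReal) ∧ (u t i : EReal) < hi i)
    (hu_eq : ∀ t : ℝ, 0 ≤ t → ∀ i, J' i (u t i) = η t i)
    (hη : ∀ t : ℝ, 0 ≤ t →
      HasDerivAt η (fun j => -(1 / β) * ((∑ i, u t i) - d) - L.mulVec (η t) j) t) :
    Tendsto η atTop (nhds (fun _ => lam)) ∧ Tendsto u atTop (nhds ubar) := by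
  have : Nonempty (Fin m) := ⟨⟨0, by omega⟩⟩
  have hη' : ∀ t ≥ 0,
      HasDerivAt η ((-(1 / β) * ∑ i, (u t i - ubar i)) • 1 - L *ᵥ η t) t := fun t ht => by
    convert hη t ht using 1
    funext j
    simp [Finset.sum_sub_distrib, hubar_sum]
  have hS : ∀ i, {x : ℝ | lo i < x ∧ x < hi i} ∈ 𝓝 (ubar i) := fun i =>
    (isOpen_Ioo.preimage continuous_coe_real_ereal).mem_nhds (hubar_mem i)
  obtain ⟨w, R, hw1, hwL, hdecomp⟩ := exists_eq_dotProduct_smul_one_add_mulVec hL1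
    (rootMultiplicity_charpoly_zero_eq_one_of_map_ofReal hL1 hsimple)
  have he : Tendsto (fun t => R *ᵥ (L *ᵥ η t)) atTop (𝓝 0) :=
    ((continuous_const.matrix_mulVec continuous_id).tendsto' 0 0 (mulVec_zero R)).comp
      (tendsto_mulVec_zero_of_hasDerivAt hL1 hsimple hspec hη')
  have hα := tendsto_of_hasDerivAt_neg_mul_sum_sub
    (fun i => strictMonoOn_of_mul_sq_le (hμ i) fun x hx y hy => hconv i x y hx.1 hx.2 hy.1 hy.2)
    hS (fun i => (hJ'cont i).continuousAt (hS i)) hlam (one_div_pos.2 hβ)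
    (fun t ht => (hη' t ht).dotProduct_of_vecMul_eq_zero hw1 hwL)
    ((eventually_ge_atTop 0).mono fun t ht i =>
      ⟨hu_mem t ht i, by simpa [hu_eq t ht i] using congrFun (hdecomp (η t)) i⟩) he
  have hηlim : Tendsto η atTop (𝓝 fun _ => lam) := by
    rw [show (fun _ => lam : Fin m → ℝ) = lam • 1 + 0 by funext; simp]
    exact ((hα.smul_const 1).add he).congr fun t => (hdecomp (η t)).symm
  refine ⟨hηlim, tendsto_pi_nhds.2 fun i =>
    tendsto_of_mul_sq_le (hμ i) ?_ (tendsto_pi_nhds.1 hηlim i)⟩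
  filter_upwards [eventually_ge_atTop 0] with t ht
  simpa [hu_eq t ht i, hlam i] using
    hconv i _ _ (hu_mem t ht i).1 (hu_mem t ht i).2 (hubar_mem i).1 (hubar_mem i).2

/-- Main convergence content of the paper's Theorem 1 (after time-scale separation): along
the reduced DAPI dynamics `η' = −(1/β)𝟙(Σᵢ uᵢ − d) − Lη`, `Jᵢ'(uᵢ) = ηᵢ`, the state `η`
converges to `η̄ = λ𝟙` and `u` converges to the unique minimizer `ū`. -/
theorem dapi_reduced_dynamics_global_attractivity
    (m : ℕ) (hm : 2 ≤ m)
    (lo hi : Fin m → EReal) (hlohi : ∀ i, lo i < hi i)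
    (J J' : Fin m → ℝ → ℝ) (μ : Fin m → ℝ) (hμ : ∀ i, 0 < μ i)
    (hderiv : ∀ i, ∀ x : ℝ, lo i < (x : EReal) → (x : EReal) < hi i →
      HasDerivAt (J i) (J' i x) x)
    (hJ'cont : ∀ i, ContinuousOn (J' i) {x : ℝ | lo i < (x : EReal) ∧ (x : EReal) < hi i})
    (hconv : ∀ i, ∀ x y : ℝ, lo i < (x : EReal) → (x : EReal) < hi i →
      lo i < (y : EReal) → (y : EReal) < hi i →
      μ i * (x - y) ^ 2 ≤ (J' i x - J' i y) * (x - y))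
    (hbarrier_lo : ∀ i, ∀ a : ℝ, lo i = (a : EReal) →
      Tendsto (J i) (nhdsWithin a (Set.Ioi a)) atTop)
    (hbarrier_hi : ∀ i, ∀ b : ℝ, hi i = (b : EReal) →
      Tendsto (J i) (nhdsWithin b (Set.Iio b)) atTop)
    (d : ℝ)
    (hfeas : ∃ u : Fin m → ℝ,
      (∀ i, lo i < (u i : EReal) ∧ (u i : EReal) < hi i) ∧ ∑ i, u i = d)
    (L : Matrix (Fin m) (Fin m) ℝ)
    (hL1 : L.mulVec (fun _ => (1 : ℝ)) = 0)
    (hsimple : ((L.map (Complex.ofReal)).charpoly).rootMultiplicity 0 = 1)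
    (hspec : ∀ z : ℂ, ((L.map (Complex.ofReal)).charpoly).IsRoot z → z ≠ 0 → 0 < z.re)
    (β : ℝ) (hβ : 0 < β)
    -- ū is the unique minimizer of the resource allocation problem
    (ubar : Fin m → ℝ)
    (hubar_mem : ∀ i, lo i < (ubar i : EReal) ∧ (ubar i : EReal) < hi i)
    (hubar_sum : ∑ i, ubar i = d)
    (hubar_min : ∀ v : Fin m → ℝ,
      ((∀ i, lo i < (v i : EReal) ∧ (v i : EReal) < hi i) ∧ ∑ i, v i = d) →
      ∑ i, J i (ubar i) ≤ ∑ i, J i (v i))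
    (hubar_unique : ∀ v : Fin m → ℝ,
      (((∀ i, lo i < (v i : EReal) ∧ (v i : EReal) < hi i) ∧ ∑ i, v i = d) ∧
        (∀ v' : Fin m → ℝ,
          ((∀ i, lo i < (v' i : EReal) ∧ (v' i : EReal) < hi i) ∧ ∑ i, v' i = d) →
          ∑ i, J i (v i) ≤ ∑ i, J i (v' i))) → v = ubar)
    -- λ is the common marginal cost at ū, and η̄ = λ𝟙
    (lam : ℝ) (hlam : ∀ i, J' i (ubar i) = lam)
    -- trajectories of the reduced DAPI dynamics
    (η : ℝ → (Fin m → ℝ)) (u : ℝ → (Fin m → ℝ))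
    (hu_mem : ∀ t : ℝ, 0 ≤ t → ∀ i, lo i < (u t i : EReal) ∧ (u t i : EReal) < hi i)
    (hu_eq : ∀ t : ℝ, 0 ≤ t → ∀ i, J' i (u t i) = η t i)
    (hη : ∀ t : ℝ, 0 ≤ t →
      HasDerivAt η (fun j => -(1 / β) * ((∑ i, u t i) - d) - L.mulVec (η t) j) t) :
    Tendsto η atTop (nhds (fun _ => lam)) ∧ Tendsto u atTop (nhds ubar) :=
  dapi_reduced_dynamics_global_attractivity_general m hm lo hi J' μ hμ hJ'cont hconv d L hL1 hsimple
    hspec β hβ ubar hubar_mem hubar_sum lam hlam η u hu_mem hu_eq hη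
end
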